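/- arXiv:2210.08795 — 9 statements merged into one kernel-verified Lean document; each statement's English description precedes it below -/
import Mathlib

section
/- Let g ≥ 2 and let Λ₁, …, Λ_g be lattices in ℂ such that the additive subgroup Λ₁ + Λ₂ + ⋯ + Λ_g is not discrete. Then there exists an index j with 2 ≤ j ≤ g such that Λ₁ + Λ_j is not discrete. -/
open Submodule Module

/-- A lattice in `ℂ`: an additive subgroup of the form `ℤa + ℤb` with `a, b`
linearly independent over `ℝ`. -/
def IsLatticeC (Λ : AddSubgroup ℂ) : Prop :=
  ∃ a b : ℂ, LinearIndependent ℝ ![a, b] ∧ Λ = AddSubgroup.closure {a, b}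

lemma IsLatticeC.exists_basis {Λ : AddSubgroup ℂ} (h : IsLatticeC Λ) :
    ∃ b : Basis (Fin 2) ℝ ℂ, AddSubgroup.toIntSubmodule Λ = span ℤ (Set.range ⇑b) := by
  obtain ⟨a, c, hli, rfl⟩ := h
  have hcard : Fintype.card (Fin 2) = finrank ℝ ℂ := by
    simp [Complex.finrank_real_complex]
  refine ⟨basisOfLinearIndependentOfCardEqFinrank hli hcard, ?_⟩
  rw [coe_basisOfLinearIndependentOfCardEqFinrank]
  have hr : Set.range ![a, c] = {a, c} := by
    ext x
    simp [Fin.exists_fin_two, or_comm]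
  rw [hr, ← Submodule.span_int_eq_addSubgroupClosure, Submodule.toAddSubgroup_toIntSubmodule]

lemma IsLatticeC.discrete_submodule {Λ : AddSubgroup ℂ} (h : IsLatticeC Λ) :
    DiscreteTopology (AddSubgroup.toIntSubmodule Λ) := by
  obtain ⟨b, hb⟩ := h.exists_basis
  rw [hb]
  infer_instance

lemma IsLatticeC.discrete {Λ : AddSubgroup ℂ} (h : IsLatticeC Λ) :
    DiscreteTopology Λ :=
  h.discrete_submodule

lemma IsLatticeC.span_top {Λ : AddSubgroup ℂ} (h : IsLatticeC Λ) :
    span ℝ ((Λ : Set ℂ)) = ⊤ := by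
  obtain ⟨b, hb⟩ := h.exists_basis
  have hc : (Λ : Set ℂ) = ((span ℤ (Set.range ⇑b) : Submodule ℤ ℂ) : Set ℂ) := by
    rw [← hb, AddSubgroup.coe_toIntSubmodule]
  rw [hc]
  refine le_antisymm le_top ?_
  rw [← b.span_eq]
  exact span_mono Submodule.subset_span

lemma exists_nsmul_mem {Λ0 H : AddSubgroup ℂ} (h0 : IsLatticeC Λ0) (hle : Λ0 ≤ H)
    (hd : DiscreteTopology H) : ∃ n : ℕ, n ≠ 0 ∧ ∀ x ∈ H, n • x ∈ Λ0 := by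
  set L : Submodule ℤ ℂ := AddSubgroup.toIntSubmodule H with hL
  set S : Submodule ℤ ℂ := AddSubgroup.toIntSubmodule Λ0 with hS
  have hSL : S ≤ L := fun x hx => hle hx
  have hdL : DiscreteTopology L := hd
  have hdS : DiscreteTopology S := h0.discrete_submodule
  have hzS : IsZLattice ℝ S := ⟨by rw [hS, AddSubgroup.coe_toIntSubmodule]; exact h0.span_top⟩
  have hzL : IsZLattice ℝ L := by
    refine ⟨le_antisymm le_top ?_⟩
    rw [← h0.span_top]
    exact span_mono hle
  have hfL : Module.Finite ℤ L := inferInstance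
  have hfS : Module.Finite ℤ S := inferInstance
  set M : Submodule ℤ L := Submodule.comap L.subtype S with hM
  have hrank : Module.rank ℤ (L ⧸ M) = 0 := by
    have h1 := rank_quotient_add_rank_of_isDomain (R := ℤ) M
    have e : M ≃ₗ[ℤ] S := Submodule.comapSubtypeEquivOfLe hSL
    have h2 : Module.rank ℤ M = Module.rank ℤ L := by
      rw [e.rank_eq, ← finrank_eq_rank, ← finrank_eq_rank, ZLattice.rank ℝ S, ZLattice.rank ℝ L]
    rw [h2] at h1
    refine Cardinal.eq_of_add_eq_add_right (b := Module.rank ℤ L) (c := 0) ?_ ?_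
    · rw [zero_add]; exact h1
    · rw [← finrank_eq_rank]; exact Cardinal.nat_lt_aleph0 _
  have htors : Module.IsTorsion ℤ (L ⧸ M) := Module.rank_eq_zero_iff_isTorsion.mp hrank
  have hfQ : Module.Finite ℤ (L ⧸ M) := Module.Finite.quotient ℤ M
  have hfin : Finite (L ⧸ M) := Module.finite_of_fg_torsion _ htors
  refine ⟨Nat.card (L ⧸ M), Nat.card_ne_zero.mpr ⟨⟨0⟩, hfin⟩, fun x hx => ?_⟩
  set y : L := ⟨x, hx⟩ with hy
  have h0' : Nat.card (L ⧸ M) • (Submodule.Quotient.mk y : L ⧸ M) = 0 := card_nsmul_eq_zero'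
  rw [← Submodule.Quotient.mk_smul, Submodule.Quotient.mk_eq_zero] at h0'
  have hmem : ((Nat.card (L ⧸ M) • y : L) : ℂ) ∈ S := h0'
  exact hmem

/-- If `Λ₁ + ⋯ + Λ_g` is not discrete, then some `Λ₁ + Λ_j` (`2 ≤ j ≤ g`) is not discrete. -/
theorem stmt0 (g : ℕ) (hg : 2 ≤ g) (Λ : Fin g → AddSubgroup ℂ)
    (hΛ : ∀ i, IsLatticeC (Λ i))
    (hnd : ¬ DiscreteTopology ↥(⨆ i, Λ i)) :
    ∃ j : Fin g, j.val ≠ 0 ∧ ¬ DiscreteTopology ↥(Λ ⟨0, by omega⟩ ⊔ Λ j) := by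
  by_contra hcon
  push_neg at hcon
  apply hnd
  have key : ∀ j : Fin g, ∃ n : ℕ, n ≠ 0 ∧ ∀ x ∈ Λ j, n • x ∈ Λ ⟨0, by omega⟩ := by
    intro j
    by_cases hj : j.val = 0
    · refine ⟨1, one_ne_zero, fun x hx => ?_⟩
      have hje : j = ⟨0, by omega⟩ := Fin.ext hj
      rw [one_smul]
      exact hje ▸ hx
    · obtain ⟨n, hn, h'⟩ := exists_nsmul_mem (hΛ ⟨0, by omega⟩) le_sup_left (hcon j hj)
      exact ⟨n, hn, fun x hx => h' x (le_sup_right (a := Λ ⟨0, by omega⟩) hx)⟩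
  choose n hn hmem using key
  set N : ℕ := ∏ j, n j with hNdef
  have hN : N ≠ 0 := Finset.prod_ne_zero_iff.mpr fun j _ => hn j
  have hsub : ∀ x ∈ (⨆ i, Λ i), N • x ∈ Λ ⟨0, by omega⟩ := by
    intro x hx
    refine AddSubgroup.iSup_induction Λ (C := fun x => N • x ∈ Λ ⟨0, by omega⟩) hx
      (fun i x hxi => ?_) (by simpa using AddSubgroup.zero_mem _)
      (fun a b ha hb => by simpa [smul_add] using add_mem ha hb)
    obtain ⟨c, hc⟩ : n i ∣ N := Finset.dvd_prod_of_mem _ (Finset.mem_univ i)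
    rw [hc, mul_comm, mul_smul]
    exact AddSubgroup.nsmul_mem _ (hmem i x hxi) c
  have hd0 : DiscreteTopology ((Λ ⟨0, by omega⟩ : AddSubgroup ℂ) : Set ℂ) := (hΛ _).discrete
  have hcont : Continuous fun x : ℂ => (N : ℂ) * x := by fun_prop
  have hinj : Function.Injective fun x : ℂ => (N : ℂ) * x := fun a b h =>
    mul_left_cancel₀ (by exact_mod_cast hN) h
  have hpre : DiscreteTopology
      ((fun x : ℂ => (N : ℂ) * x) ⁻¹' ((Λ ⟨0, by omega⟩ : AddSubgroup ℂ) : Set ℂ)) :=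
    DiscreteTopology.preimage_of_continuous_injective _ hcont hinj
  refine DiscreteTopology.of_subset hpre ?_
  intro x hx
  have hx' : N • x ∈ Λ ⟨0, by omega⟩ := hsub x hx
  show (N : ℂ) * x ∈ Λ ⟨0, by omega⟩
  rwa [nsmul_eq_mul] at hx'
end

section
/- Let ℓ be a one-dimensional ℝ-linear subspace of ℂ (a line through 0), let w ∈ ℂ with w ∉ ℓ, and set L = ℓ + ℤw. If H is a closed additive subgroup of ℂ with L ⊆ H and H ≠ ℂ, then there exists a positive integer n such that H = ℓ + ℤ·(w/n). -/
/-!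
Write `ℂ = ℓ ⊕ ℝw`. Since `ℓ ≤ H`, the group `H` is `ℓ + S • w`, where `S = {t : ℝ | t • w ∈ H}`
is a closed subgroup of `ℝ` containing `1`. A closed subgroup of `ℝ` is either `ℝ` itself, which
would force `H = ℂ`, or cyclic; a cyclic group containing `1` is `ℤ • (1 / n)` for some `n > 0`.
-/

open AddSubgroup

namespace AddSubgroup

theorem exists_eq_zmultiples_inv_natCast_of_isClosed {S : AddSubgroup ℝ}
    (hS : IsClosed (S : Set ℝ)) (h1 : (1 : ℝ) ∈ S) (hne : S ≠ ⊤) :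
    ∃ n : ℕ, 0 < n ∧ S = zmultiples (n : ℝ)⁻¹ := by
  rcases S.dense_or_cyclic with hdense | ⟨a, rfl⟩
  · exact absurd (SetLike.coe_injective (hS.closure_eq ▸ hdense.closure_eq)) hne
  rw [← zmultiples_eq_closure] at h1 ⊢
  obtain ⟨k, hk⟩ := mem_zmultiples_iff.mp h1
  have hk0 : k ≠ 0 := by rintro rfl; simp at hk
  have ha : a = (k : ℝ)⁻¹ := by
    rw [zsmul_eq_mul] at hk
    exact eq_inv_of_mul_eq_one_right hk
  obtain ⟨n, rfl | rfl⟩ := Int.eq_nat_or_neg k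
  · exact ⟨n, by omega, by rw [ha, Int.cast_natCast]⟩
  · exact ⟨n, by omega, by rw [ha, Int.cast_neg, Int.cast_natCast, inv_neg, zmultiples_neg]⟩

end AddSubgroup

section coeffSubgroup

variable (K : Type*) {E : Type*} [Ring K] [AddCommGroup E] [Module K E]

def coeffSubgroup (H : AddSubgroup E) (w : E) : AddSubgroup K :=
  H.comap (LinearMap.toSpanSingleton K E w).toAddMonoidHom

variable {K}

theorem mem_coeffSubgroup {H : AddSubgroup E} {w : E} {t : K} :
    t ∈ coeffSubgroup K H w ↔ t • w ∈ H :=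
  Iff.rfl

theorem isClosed_coeffSubgroup [TopologicalSpace K] [TopologicalSpace E] [ContinuousSMul K E]
    {H : AddSubgroup E} (hH : IsClosed (H : Set E)) (w : E) :
    IsClosed (coeffSubgroup K H w : Set K) :=
  hH.preimage (continuous_id.smul continuous_const)

variable {ℓ : Submodule K E} {w : E} {H : AddSubgroup E}

theorem Submodule.exists_add_smul_of_sup_span_singleton_eq_top (hspan : ℓ ⊔ K ∙ w = ⊤) (x : E) :
    ∃ a ∈ ℓ, ∃ t : K, a + t • w = x := by
  obtain ⟨a, ha, y, hy, rfl⟩ := Submodule.mem_sup.mp (hspan ▸ Submodule.mem_top (x := x))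
  obtain ⟨t, rfl⟩ := Submodule.mem_span_singleton.mp hy
  exact ⟨a, ha, t, rfl⟩

theorem eq_sup_map_coeffSubgroup (hspan : ℓ ⊔ K ∙ w = ⊤) (hℓH : ℓ.toAddSubgroup ≤ H) :
    H = ℓ.toAddSubgroup ⊔
      (coeffSubgroup K H w).map (LinearMap.toSpanSingleton K E w).toAddMonoidHom := by
  refine le_antisymm (fun x hx => ?_) (sup_le hℓH (map_comap_le _ _))
  obtain ⟨a, ha, t, rfl⟩ := Submodule.exists_add_smul_of_sup_span_singleton_eq_top hspan x
  have htw : t • w ∈ H := by simpa using H.sub_mem hx (hℓH ha)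
  exact add_mem_sup ha (mem_map_of_mem _ (mem_coeffSubgroup.mpr htw))

theorem eq_top_of_coeffSubgroup_eq_top (hspan : ℓ ⊔ K ∙ w = ⊤) (hℓH : ℓ.toAddSubgroup ≤ H)
    (htop : coeffSubgroup K H w = ⊤) : H = ⊤ := by
  refine eq_top_iff.mpr (fun x _ => ?_)
  obtain ⟨a, ha, t, rfl⟩ := Submodule.exists_add_smul_of_sup_span_singleton_eq_top hspan x
  exact H.add_mem (hℓH ha) (mem_coeffSubgroup.mp (htop ▸ mem_top t))

end coeffSubgroup

/-- If `ℓ` is a line through `0` in `ℂ`, `w ∉ ℓ`, and `H` is a closed additive subgroup of `ℂ`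
containing `L = ℓ + ℤw` with `H ≠ ℂ`, then `H = ℓ + ℤ(w/n)` for some positive integer `n`. -/
theorem stmt3 (ℓ : Submodule ℝ ℂ) (hℓ : Module.finrank ℝ ℓ = 1)
    (w : ℂ) (hw : w ∉ ℓ)
    (H : AddSubgroup ℂ) (hclosed : IsClosed (H : Set ℂ))
    (hsub : ℓ.toAddSubgroup ⊔ AddSubgroup.closure {w} ≤ H)
    (hne : H ≠ ⊤) :
    ∃ n : ℕ, 0 < n ∧ H = ℓ.toAddSubgroup ⊔ AddSubgroup.closure {w / (n : ℂ)} := by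
  have hspan : ℓ ⊔ ℝ ∙ w = ⊤ := Submodule.eq_top_of_finrank_eq <| by
    rw [Submodule.finrank_sup_span_singleton hw, hℓ, Complex.finrank_real_complex]
  have hℓH : ℓ.toAddSubgroup ≤ H := le_sup_left.trans hsub
  have hwH : w ∈ H := hsub (mem_sup_right (subset_closure rfl))
  obtain ⟨n, hn, hS⟩ := exists_eq_zmultiples_inv_natCast_of_isClosed
    (isClosed_coeffSubgroup hclosed w) (mem_coeffSubgroup.mpr (by simpa using hwH))
    (fun htop => hne (eq_top_of_coeffSubgroup_eq_top hspan hℓH htop))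
  refine ⟨n, hn, ?_⟩
  rw [eq_sup_map_coeffSubgroup hspan hℓH, hS, AddMonoidHom.map_zmultiples,
    zmultiples_eq_closure]
  congr 3
  simp [Complex.real_smul, div_eq_inv_mul]
end

section
/- Let G be an additive subgroup of ℂ that contains a lattice. Then the topological closure of G is one of the following: (i) a lattice in ℂ (this happens exactly when G is discrete); (ii) a subgroup of the form ℓ + ℤw for some one-dimensional ℝ-linear subspace ℓ of ℂ and some w ∈ ℂ with w ∉ ℓ; or (iii) all of ℂ. -/
open Filter Topology Submodule Module

theorem AddSubgroup.zero_mem_closure_diff_of_not_discreteTopology {E : Type*}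
    [AddGroup E] [TopologicalSpace E] [IsTopologicalAddGroup E] {H : AddSubgroup E}
    (hH : ¬DiscreteTopology H) :
    (0 : E) ∈ _root_.closure ((H : Set E) \ {0}) := by
  contrapose! hH
  rw [discreteTopology_iff_isOpen_singleton_zero, isOpen_induced_iff]
  refine ⟨(_root_.closure ((H : Set E) \ {0}))ᶜ, isClosed_closure.isOpen_compl, ?_⟩
  ext ⟨x, hx⟩
  by_cases hx0 : x = 0
  · simp [hx0, hH]
  · simpa [hx0] using _root_.subset_closure (Set.mem_sdiff_of_mem hx hx0)

theorem tendsto_floor_div_mul {ι : Type*} {l : Filter ι} {r : ι → ℝ} (hr : ∀ n, 0 < r n)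
    (hr0 : Tendsto r l (𝓝 0)) (t : ℝ) : Tendsto (fun n => (⌊t / r n⌋ : ℝ) * r n) l (𝓝 t) := by
  refine tendsto_of_tendsto_of_tendsto_of_le_of_le (g := fun n => t - r n)
    (by simpa using tendsto_const_nhds.sub hr0) tendsto_const_nhds (fun n => ?_) (fun n => ?_)
  · have := (div_lt_iff₀ (hr n)).mp (Int.lt_floor_add_one (t / r n))
    dsimp only
    linarith
  · exact (le_div_iff₀ (hr n)).mp (Int.floor_le _)

theorem AddSubgroup.exists_forall_smul_mem_of_zero_mem_closure {E : Type*}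
    [NormedAddCommGroup E] [NormedSpace ℝ E] [ProperSpace E] {H : AddSubgroup E}
    (hH : IsClosed (H : Set E))
    (h0 : (0 : E) ∈ _root_.closure ((H : Set E) \ {0})) : ∃ u ≠ 0, ∀ t : ℝ, t • u ∈ H := by
  obtain ⟨x, hxH0, hx⟩ := mem_closure_iff_seq_limit.mp h0
  have hxH n : x n ∈ H := (hxH0 n).1
  have hx0 n : x n ≠ 0 := (hxH0 n).2
  have hsphere : ∀ n, ‖x n‖⁻¹ • x n ∈ Metric.sphere (0 : E) 1 := fun n => by
    simp [norm_smul, hx0 n]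
  obtain ⟨u, hu, φ, hφ, hconv⟩ := (isCompact_sphere (0 : E) 1).tendsto_subseq hsphere
  refine ⟨u, ne_zero_of_mem_unit_sphere ⟨u, hu⟩, fun t => hH.mem_of_tendsto
    ((tendsto_floor_div_mul (fun n => norm_pos_iff.mpr (hx0 (φ n)))
      (tendsto_norm_zero.comp (hx.comp hφ.tendsto_atTop)) t).smul hconv)
    (Eventually.of_forall fun n => ?_)⟩
  have hn : ‖x (φ n)‖ ≠ 0 := norm_ne_zero_iff.mpr (hx0 (φ n))
  simp only [Function.comp_apply, smul_smul, mul_assoc, mul_inv_cancel₀ hn, mul_one,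
    Int.cast_smul_eq_zsmul]
  exact H.zsmul_mem (hxH _) _

theorem AddSubgroup.eq_top_or_exists_eq_zmultiples_of_isClosed {S : AddSubgroup ℝ}
    (hS : IsClosed (S : Set ℝ)) : S = ⊤ ∨ ∃ α, S = AddSubgroup.zmultiples α := by
  rcases S.dense_or_cyclic with hdense | ⟨α, rfl⟩
  · left
    rw [← AddSubgroup.coe_eq_univ, ← hS.closure_eq, hdense.closure_eq]
  · exact Or.inr ⟨α, (AddSubgroup.zmultiples_eq_closure α).symm⟩

section Hyperplane

variable {E : Type*} [AddCommGroup E] [Module ℝ E] {f : E →ₗ[ℝ] ℝ} {v : E}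

theorem AddSubgroup.comap_eq_ker_sup_map_toSpanSingleton (hv : f v = 1) (S : AddSubgroup ℝ) :
    S.comap f.toAddMonoidHom =
      (LinearMap.ker f).toAddSubgroup ⊔ S.map (LinearMap.toSpanSingleton ℝ E v).toAddMonoidHom := by
  apply le_antisymm
  · intro z hz
    have hker : z - f z • v ∈ LinearMap.ker f := by simp [hv]
    rw [← sub_add_cancel z (f z • v)]
    exact AddSubgroup.add_mem_sup hker ⟨f z, hz, rfl⟩
  · rw [sup_le_iff]
    constructor
    · intro z hz
      simp [LinearMap.mem_ker.mp hz, S.zero_mem]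
    · rintro _ ⟨s, hs, rfl⟩
      simpa [hv] using hs

theorem AddSubgroup.eq_comap_of_ker_le (hv : f v = 1) {H : AddSubgroup E}
    (hker : (LinearMap.ker f).toAddSubgroup ≤ H) :
    H = (H.comap (LinearMap.toSpanSingleton ℝ E v).toAddMonoidHom).comap f.toAddMonoidHom := by
  ext z
  have : z - f z • v ∈ H := hker (by simp [hv])
  have hz : z = (z - f z • v) + f z • v := (sub_add_cancel _ _).symm
  simp only [AddSubgroup.mem_comap, LinearMap.toAddMonoidHom_coe, LinearMap.toSpanSingleton_apply]
  conv_lhs => rw [hz]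
  exact H.add_mem_cancel_left this

theorem AddSubgroup.eq_top_or_exists_eq_ker_sup_closure [TopologicalSpace E]
    [ContinuousSMul ℝ E] (hv : f v = 1) {H : AddSubgroup E} (hH : IsClosed (H : Set E))
    (hker : (LinearMap.ker f).toAddSubgroup ≤ H) :
    H = ⊤ ∨ ∃ w, H = (LinearMap.ker f).toAddSubgroup ⊔ AddSubgroup.closure {w} := by
  have hS : IsClosed (H.comap (LinearMap.toSpanSingleton ℝ E v).toAddMonoidHom : Set ℝ) :=
    hH.preimage (continuous_id.smul continuous_const)
  rw [AddSubgroup.eq_comap_of_ker_le hv hker]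
  rcases AddSubgroup.eq_top_or_exists_eq_zmultiples_of_isClosed hS with hS | ⟨α, hα⟩
  · exact Or.inl (by rw [hS, AddSubgroup.comap_top])
  · refine Or.inr ⟨α • v, ?_⟩
    rw [hα, AddSubgroup.comap_eq_ker_sup_map_toSpanSingleton hv, AddMonoidHom.map_zmultiples,
      AddSubgroup.zmultiples_eq_closure]
    rfl

end Hyperplane

theorem Complex.ker_im_comp_mulLeft_inv {u : ℂ} (hu : u ≠ 0) :
    LinearMap.ker (Complex.imLm ∘ₗ LinearMap.mulLeft ℝ u⁻¹) = ℝ ∙ u := by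
  ext z
  simp only [LinearMap.mem_ker, LinearMap.coe_comp, Function.comp_apply, LinearMap.mulLeft_apply,
    Complex.imLm_coe, mem_span_singleton]
  constructor
  · intro h
    refine ⟨(u⁻¹ * z).re, ?_⟩
    have : ((u⁻¹ * z).re : ℂ) = u⁻¹ * z := Complex.ext (by simp) (by simp [h])
    rw [Complex.real_smul, this, mul_comm, mul_inv_cancel_left₀ hu]
  · rintro ⟨t, rfl⟩
    rw [Complex.real_smul, mul_left_comm, inv_mul_cancel₀ hu, mul_one, Complex.ofReal_im]

theorem AddSubgroup.exists_eq_sup_closure_or_eq_top {H : AddSubgroup ℂ}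
    (hH : IsClosed (H : Set ℂ)) {u : ℂ} (hu : u ≠ 0) (hline : ∀ t : ℝ, t • u ∈ H) {a b : ℂ}
    (hab : LinearIndependent ℝ ![a, b]) (ha : a ∈ H) (hb : b ∈ H) :
    (∃ (ℓ : Submodule ℝ ℂ) (w : ℂ), finrank ℝ ℓ = 1 ∧ w ∉ ℓ ∧
        H = ℓ.toAddSubgroup ⊔ AddSubgroup.closure {w}) ∨ H = ⊤ := by
  have hv : (Complex.imLm ∘ₗ LinearMap.mulLeft ℝ u⁻¹) (u * Complex.I) = 1 := by
    simp [hu]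
  have hker := Complex.ker_im_comp_mulLeft_inv hu
  have hℓH : (ℝ ∙ u).toAddSubgroup ≤ H := by
    intro z hz
    obtain ⟨t, rfl⟩ := mem_span_singleton.mp hz
    exact hline t
  rcases AddSubgroup.eq_top_or_exists_eq_ker_sup_closure hv hH (hker ▸ hℓH) with htop | ⟨w, hw⟩
  · exact Or.inr htop
  rw [hker] at hw
  refine Or.inl ⟨ℝ ∙ u, w, finrank_span_singleton hu, fun hwℓ => ?_, hw⟩
  have hHℓ : H ≤ (ℝ ∙ u).toAddSubgroup := by
    rw [hw, sup_le_iff, AddSubgroup.closure_le, Set.singleton_subset_iff]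
    exact ⟨le_rfl, hwℓ⟩
  have hspan : span ℝ (Set.range ![a, b]) ≤ ℝ ∙ u := by
    rw [Matrix.range_cons_cons_empty, span_le, Set.insert_subset_iff, Set.singleton_subset_iff]
    exact ⟨hHℓ ha, hHℓ hb⟩
  have := Submodule.finrank_mono hspan
  rw [finrank_span_eq_card hab, finrank_span_singleton hu] at this
  simp at this

theorem IsLatticeC.discreteTopology {Λ : AddSubgroup ℂ} (hΛ : IsLatticeC Λ) :
    DiscreteTopology Λ := by
  obtain ⟨a, b, hab, rfl⟩ := hΛ
  let B : Basis (Fin 2) ℝ ℂ :=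
    basisOfLinearIndependentOfCardEqFinrank hab (by simp [Complex.finrank_real_complex])
  have hB : Set.range B = {a, b} := by
    rw [coe_basisOfLinearIndependentOfCardEqFinrank, Matrix.range_cons_cons_empty]
  have hclosure : (AddSubgroup.closure {a, b} : Set ℂ) = span ℤ (Set.range B) := by
    rw [hB, ← Submodule.span_int_eq_addSubgroupClosure]
    rfl
  exact DiscreteTopology.of_subset (inferInstance : DiscreteTopology (span ℤ (Set.range B)))
    hclosure.le

theorem isLatticeC_of_discreteTopology {H : AddSubgroup ℂ} [DiscreteTopology H] {a b : ℂ}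
    (hab : LinearIndependent ℝ ![a, b]) (ha : a ∈ H) (hb : b ∈ H) : IsLatticeC H := by
  let L : Submodule ℤ ℂ := H.toIntSubmodule
  have : DiscreteTopology L := ‹DiscreteTopology H›
  have : IsZLattice ℝ L := by
    refine ⟨eq_top_iff.mpr ?_⟩
    rw [← hab.span_eq_top_of_card_eq_finrank (by simp [Complex.finrank_real_complex]),
      Matrix.range_cons_cons_empty, span_le, Set.insert_subset_iff, Set.singleton_subset_iff]
    exact ⟨subset_span ha, subset_span hb⟩
  have hrank : finrank ℤ L = 2 := by rw [ZLattice.rank ℝ L, Complex.finrank_real_complex]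
  let C : Basis (Fin 2) ℝ ℂ :=
    ((Module.finBasis ℤ L).reindex (finCongr hrank)).ofZLatticeBasis ℝ L
  have hC : ![C 0, C 1] = C := by
    ext i
    fin_cases i <;> rfl
  refine ⟨C 0, C 1, hC ▸ C.linearIndependent, ?_⟩
  rw [← Submodule.span_int_eq_addSubgroupClosure, ← Matrix.range_cons_cons_empty, hC,
    Basis.ofZLatticeBasis_span]
  rfl

/-- If an additive subgroup `G` of `ℂ` contains a lattice, then its topological closure is
either (i) a lattice (which happens exactly when `G` is discrete), (ii) of the form `ℓ + ℤw`
for a line `ℓ` through `0` and `w ∉ ℓ`, or (iii) all of `ℂ`. -/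
theorem stmt4 (G : AddSubgroup ℂ) (hG : ∃ Λ : AddSubgroup ℂ, IsLatticeC Λ ∧ Λ ≤ G) :
    (IsLatticeC G.topologicalClosure ∨
      (∃ (ℓ : Submodule ℝ ℂ) (w : ℂ), Module.finrank ℝ ℓ = 1 ∧ w ∉ ℓ ∧
        G.topologicalClosure = ℓ.toAddSubgroup ⊔ AddSubgroup.closure {w}) ∨
      G.topologicalClosure = ⊤) ∧
    (IsLatticeC G.topologicalClosure ↔ DiscreteTopology ↥G) := by
  obtain ⟨_, ⟨a, b, hab, rfl⟩, hΛG⟩ := hG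
  have ha : a ∈ G.topologicalClosure :=
    G.le_topologicalClosure (hΛG (AddSubgroup.subset_closure (by simp)))
  have hb : b ∈ G.topologicalClosure :=
    G.le_topologicalClosure (hΛG (AddSubgroup.subset_closure (by simp)))
  by_cases hd : DiscreteTopology G.topologicalClosure
  · have hlat := isLatticeC_of_discreteTopology hab ha hb
    exact ⟨Or.inl hlat, iff_of_true hlat (DiscreteTopology.of_subset hd G.le_topologicalClosure)⟩
  have hGd : ¬DiscreteTopology G := fun _ =>
    hd (by rwa [show G.topologicalClosure = G from SetLike.ext' G.isClosed_of_discrete.closure_eq])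
  obtain ⟨u, hu, hline⟩ := AddSubgroup.exists_forall_smul_mem_of_zero_mem_closure
    G.isClosed_topologicalClosure (AddSubgroup.zero_mem_closure_diff_of_not_discreteTopology hd)
  exact ⟨Or.inr (AddSubgroup.exists_eq_sup_closure_or_eq_top G.isClosed_topologicalClosure hu
    hline hab ha hb), iff_of_false (fun h => hd h.discreteTopology) hGd⟩
end

section
/- Let Λ₁ be a lattice in ℂ and let G₂, …, G_g be additive subgroups of ℂ such that Λ₁ + G_j is discrete for every j ∈ {2, …, g}. Then Λ₁ + G₂ + ⋯ + G_g is discrete. -/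
open Submodule

private lemma range_pair (a b : ℂ) : Set.range ![a, b] = {a, b} := by
  ext z
  simp only [Set.mem_range, Fin.exists_fin_two, Matrix.cons_val_zero, Matrix.cons_val_one,
    Matrix.head_cons, Set.mem_insert_iff, Set.mem_singleton_iff]
  tauto

private lemma span_pair_top (a b : ℂ) (hli : LinearIndependent ℝ ![a, b]) :
    span ℝ ({a, b} : Set ℂ) = ⊤ := by
  let B := basisOfLinearIndependentOfCardEqFinrank hli
    (by simp [Complex.finrank_real_complex])
  have := B.span_eq
  rwa [coe_basisOfLinearIndependentOfCardEqFinrank, range_pair] at this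

private lemma key (a b : ℂ) (hli : LinearIndependent ℝ ![a, b])
    (M : Submodule ℤ ℂ) [DiscreteTopology M]
    (ha : a ∈ M) (hb : b ∈ M) :
    ∃ N : ℕ, 0 < N ∧ ∀ x ∈ M, (N : ℤ) • x ∈ span ℤ ({a, b} : Set ℂ) := by
  have hspan : span ℝ (M : Set ℂ) = ⊤ := by
    refine eq_top_iff.mpr ?_
    rw [← span_pair_top a b hli]
    refine span_le.mpr ?_
    rintro z (rfl | rfl)
    · exact subset_span ha
    · exact subset_span hb
  have hZL : IsZLattice ℝ M := ⟨hspan⟩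
  have hfin : Module.Finite ℤ M := inferInstance
  have hrank : Module.finrank ℤ M = 2 := by
    rw [ZLattice.rank ℝ M, Complex.finrank_real_complex]
  have tor : ∀ x, x ∈ M → ∃ k : ℤ, k ≠ 0 ∧ k • x ∈ span ℤ ({a, b} : Set ℂ) := by
    intro x hx
    have h3 : ¬ LinearIndependent ℤ ![(⟨x, hx⟩ : M), ⟨a, ha⟩, ⟨b, hb⟩] := by
      intro hI
      have := hI.fintype_card_le_finrank
      rw [hrank] at this
      simp at this
    rw [Fintype.not_linearIndependent_iff] at h3
    obtain ⟨g, hg, i, hi⟩ := h3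
    have hsum : g 0 • x + g 1 • a + g 2 • b = 0 := by
      have := congrArg (Subtype.val) hg
      simpa [Fin.sum_univ_three, add_assoc] using this
    have hg0 : g 0 ≠ 0 := by
      intro h0
      rw [h0, zero_smul, zero_add] at hsum
      have hcoef := Fintype.linearIndependent_iff.mp hli ![(g 1 : ℝ), (g 2 : ℝ)]
        (by
          simp only [Fin.sum_univ_two, Matrix.cons_val_zero, Matrix.cons_val_one, Matrix.head_cons]
          rw [Int.cast_smul_eq_zsmul, Int.cast_smul_eq_zsmul]
          exact hsum)
      have h1 : g 1 = 0 := by have := hcoef 0; simp at this; exact_mod_cast this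
      have h2 : g 2 = 0 := by have := hcoef 1; simp at this; exact_mod_cast this
      fin_cases i <;> simp_all
    refine ⟨g 0, hg0, ?_⟩
    rw [add_assoc] at hsum
    have hx0 : g 0 • x = -(g 1 • a + g 2 • b) := eq_neg_of_add_eq_zero_left hsum
    rw [hx0]
    have hma : g 1 • a ∈ span ℤ ({a, b} : Set ℂ) :=
      Submodule.smul_mem _ (g 1) (subset_span (Set.mem_insert a _))
    have hmb : g 2 • b ∈ span ℤ ({a, b} : Set ℂ) :=
      Submodule.smul_mem _ (g 2) (subset_span (Set.mem_insert_of_mem a rfl))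
    exact neg_mem (add_mem hma hmb)
  obtain ⟨s, hs⟩ := (Module.Finite.iff_fg.mp hfin)
  have hsub : (s : Set ℂ) ⊆ M := by rw [← hs]; exact subset_span
  choose k hk0 hkm using tor
  refine ⟨∏ y ∈ s.attach, (k y (hsub y.2)).natAbs, ?_, ?_⟩
  · exact Finset.prod_pos fun y _ => Int.natAbs_pos.mpr (hk0 _ _)
  · intro x hx
    set N : ℕ := ∏ y ∈ s.attach, (k y (hsub y.2)).natAbs with hN
    have hxs : x ∈ span ℤ (s : Set ℂ) := by rw [hs]; exact hx
    have hle : span ℤ (s : Set ℂ) ≤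
        Submodule.comap ((N : ℤ) • (LinearMap.id : ℂ →ₗ[ℤ] ℂ)) (span ℤ ({a, b} : Set ℂ)) := by
      refine span_le.mpr ?_
      intro y hy
      have hdvd : k y (hsub hy) ∣ (N : ℤ) := by
        refine dvd_trans (Int.dvd_natAbs.mpr dvd_rfl) ?_
        exact_mod_cast Int.natCast_dvd_natCast.mpr
          (Finset.dvd_prod_of_mem _ (Finset.mem_attach s ⟨y, hy⟩))
      obtain ⟨c, hc⟩ := hdvd
      simp only [SetLike.mem_coe, Submodule.mem_comap, LinearMap.smul_apply, LinearMap.id_apply]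
      rw [hc, mul_comm, mul_smul]
      exact zsmul_mem (hkm y (hsub hy)) c
    have := hle hxs
    simpa only [Submodule.mem_comap, LinearMap.smul_apply, LinearMap.id_apply] using this

private lemma test (a b : ℂ) (hli : LinearIndependent ℝ ![a, b]) :
    DiscreteTopology ↥(AddSubgroup.closure ({a, b} : Set ℂ)) := by
  let B := basisOfLinearIndependentOfCardEqFinrank hli
    (by simp [Complex.finrank_real_complex])
  have h1 : DiscreteTopology (span ℤ (Set.range ⇑B)) := inferInstance
  rw [coe_basisOfLinearIndependentOfCardEqFinrank, range_pair] at h1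
  have h2 : (span ℤ ({a,b} : Set ℂ)).toAddSubgroup = AddSubgroup.closure {a, b} :=
    span_int_eq_addSubgroupClosure _
  rw [← h2]
  exact h1

/-- If `Λ₁` is a lattice in `ℂ` and `G₂, …, G_g` are additive subgroups such that each
`Λ₁ + G_j` is discrete, then `Λ₁ + G₂ + ⋯ + G_g` is discrete. -/
theorem stmt5 (Λ : AddSubgroup ℂ) (hΛ : IsLatticeC Λ) (n : ℕ)
    (G : Fin n → AddSubgroup ℂ)
    (h : ∀ j, DiscreteTopology ↥(Λ ⊔ G j)) :
    DiscreteTopology ↥(Λ ⊔ ⨆ j, G j) := by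
  obtain ⟨a, b, hli, rfl⟩ := hΛ
  set Λ := AddSubgroup.closure ({a, b} : Set ℂ) with hΛdef
  have hmemΛ : ∀ x : ℂ, x ∈ span ℤ ({a, b} : Set ℂ) ↔ x ∈ Λ := by
    intro x
    rw [hΛdef, ← span_int_eq_addSubgroupClosure]
    rfl
  -- each `Λ ⊔ G j` gives an `N j`
  have hkey : ∀ j : Fin n, ∃ N : ℕ, 0 < N ∧
      ∀ x ∈ Λ ⊔ G j, (N : ℤ) • x ∈ span ℤ ({a, b} : Set ℂ) := by
    intro j
    set M : Submodule ℤ ℂ := (Λ ⊔ G j).toIntSubmodule with hM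
    have hMd : DiscreteTopology M :=
      DiscreteTopology.of_subset (s := ((Λ ⊔ G j : AddSubgroup ℂ) : Set ℂ)) (h j)
        (fun x hx => hx)
    have haM : a ∈ M := le_sup_left (a := Λ) (AddSubgroup.subset_closure (Set.mem_insert a _))
    have hbM : b ∈ M :=
      le_sup_left (a := Λ) (AddSubgroup.subset_closure (Set.mem_insert_of_mem a rfl))
    obtain ⟨N, hN0, hN⟩ := key a b hli M haM hbM
    exact ⟨N, hN0, fun x hx => hN x hx⟩
  choose N hN0 hN using hkey
  set Ntot : ℕ := ∏ j, N j with hNtot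
  have hNtot0 : (Ntot : ℤ) ≠ 0 := by
    have : 0 < Ntot := Finset.prod_pos fun j _ => hN0 j
    exact_mod_cast this.ne'
  -- the big discrete subgroup
  let f : ℂ →+ ℂ := AddMonoidHom.mk' (fun z => (Ntot : ℤ) • z) (fun x y => smul_add _ x y)
  set K : AddSubgroup ℂ := AddSubgroup.comap f Λ with hK
  have hΛdisc : DiscreteTopology ↥Λ := test a b hli
  have hKdisc : DiscreteTopology ↥K := by
    have hc : Continuous (fun z : ℂ => (Ntot : ℤ) • z) := continuous_const_smul _
    have hinj : Function.Injective (fun z : ℂ => (Ntot : ℤ) • z) :=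
      smul_right_injective ℂ hNtot0
    exact DiscreteTopology.preimage_of_continuous_injective ((Λ : Set ℂ)) hc hinj
  have hle : Λ ⊔ ⨆ j, G j ≤ K := by
    refine sup_le ?_ (iSup_le fun j => ?_)
    · intro x hx
      exact AddSubgroup.zsmul_mem Λ hx _
    · intro g hg
      have hgM : g ∈ Λ ⊔ G j := le_sup_right (a := Λ) hg
      have h1 : ((N j : ℤ)) • g ∈ span ℤ ({a, b} : Set ℂ) := hN j g hgM
      have hdvd : N j ∣ Ntot := Finset.dvd_prod_of_mem _ (Finset.mem_univ j)
      obtain ⟨c, hc⟩ := hdvd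
      have : (Ntot : ℤ) • g ∈ span ℤ ({a, b} : Set ℂ) := by
        have : (Ntot : ℤ) = (c : ℤ) * (N j : ℤ) := by exact_mod_cast (hc.trans (mul_comm _ _))
        rw [this, mul_smul]
        exact Submodule.smul_mem _ _ h1
      exact (hmemΛ _).mp this
  exact DiscreteTopology.of_subset (s := (K : Set ℂ)) hKdisc
    (fun x hx => hle hx)
end

section
/- Let ℓ be a one-dimensional ℝ-linear subspace of ℂ, let w ∈ ℂ with w ∉ ℓ, and set L = ℓ + ℤw. Let G₂, …, G_g be additive subgroups of ℂ such that for each k ∈ {2, …, g} the topological closure of L + G_k is not all of ℂ. Then L + G₂ + ⋯ + G_g is not dense in ℂ. -/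
/-- If a subgroup of `ℂ` contains the kernel of a linear functional `f` with `f w = 1`,
and its image under `f` is dense in `ℝ`, then it is dense in `ℂ`. -/
lemma aux_dense (f : ℂ →ₗ[ℝ] ℝ) (w : ℂ) (hfw : f w = 1) (S : AddSubgroup ℂ)
    (hker : ∀ x : ℂ, f x = 0 → x ∈ S) (hd : Dense (f '' (S : Set ℂ))) :
    Dense (S : Set ℂ) := by
  rw [Metric.dense_iff]
  intro z ε hε
  have hε' : 0 < ε / (‖w‖ + 1) := by positivity
  obtain ⟨y, hy1, hy2⟩ := Metric.dense_iff.mp hd (f z) _ hε'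
  obtain ⟨g, hg, rfl⟩ := hy2
  have hl : (z - f z • w) - (g - f g • w) ∈ S := by
    apply hker
    simp only [map_sub, map_smul, hfw, smul_eq_mul, mul_one]
    ring
  refine ⟨g + ((z - f z • w) - (g - f g • w)), ?_, S.add_mem hg hl⟩
  have h1 : g + ((z - f z • w) - (g - f g • w)) = z + (f g - f z) • w := by module
  rw [h1, Metric.mem_ball, dist_eq_norm]
  have h2 : z + (f g - f z) • w - z = (f g - f z) • w := by module
  rw [h2, norm_smul]
  rw [Metric.mem_ball, Real.dist_eq] at hy1
  calc ‖f g - f z‖ * ‖w‖ ≤ ‖f g - f z‖ * (‖w‖ + 1) := by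
        apply mul_le_mul_of_nonneg_left (by linarith [norm_nonneg w]) (norm_nonneg _)
    _ < (ε / (‖w‖ + 1)) * (‖w‖ + 1) := by
        apply mul_lt_mul_of_pos_right ?_ (by positivity)
        rw [Real.norm_eq_abs]
        exact hy1
    _ = ε := by field_simp

/-- Let `L = ℓ + ℤw` where `ℓ` is a line through `0` in `ℂ` and `w ∉ ℓ`. If `G₂, …, G_g` are
additive subgroups of `ℂ` such that no `L + G_k` has closure all of `ℂ`, then
`L + G₂ + ⋯ + G_g` is not dense in `ℂ`. -/
theorem stmt6 (ℓ : Submodule ℝ ℂ) (hℓ : Module.finrank ℝ ℓ = 1) (w : ℂ) (hw : w ∉ ℓ)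
    (n : ℕ) (G : Fin n → AddSubgroup ℂ)
    (h : ∀ k, (ℓ.toAddSubgroup ⊔ AddSubgroup.closure {w} ⊔ G k).topologicalClosure ≠ ⊤) :
    ¬ Dense ((ℓ.toAddSubgroup ⊔ AddSubgroup.closure {w} ⊔ ⨆ k, G k : AddSubgroup ℂ) : Set ℂ) := by
  classical
  -- get a generator of ℓ
  obtain ⟨v₀, hv₀ne, hv₀⟩ := finrank_eq_one_iff'.mp hℓ
  set v : ℂ := (v₀ : ℂ) with hv
  have hvℓ : v ∈ ℓ := v₀.2
  have hvne : v ≠ 0 := fun hh => hv₀ne (Subtype.ext hh)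
  have hmemℓ : ∀ x ∈ ℓ, ∃ c : ℝ, c • v = x := by
    intro x hx
    obtain ⟨c, hc⟩ := hv₀ ⟨x, hx⟩
    exact ⟨c, congrArg Subtype.val hc⟩
  -- v, w are linearly independent
  have hli : LinearIndependent ℝ ![v, w] := by
    rw [LinearIndependent.pair_iff]
    intro s t hst
    rw [Complex.real_smul, Complex.real_smul] at hst
    have ht : t = 0 := by
      by_contra ht
      apply hw
      have htC : (t : ℂ) ≠ 0 := by exact_mod_cast ht
      have hwv : w = (-s / t) • v := by
        rw [Complex.real_smul]
        push_cast
        field_simp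
        linear_combination hst
      rw [hwv]
      exact ℓ.smul_mem _ hvℓ
    subst ht
    push_cast at hst
    rw [zero_mul, add_zero, mul_eq_zero] at hst
    rcases hst with hst | hst
    · exact ⟨by exact_mod_cast hst, rfl⟩
    · exact absurd hst hvne
  have hcard : Fintype.card (Fin 2) = Module.finrank ℝ ℂ := by
    simp [Complex.finrank_real_complex]
  let B := basisOfLinearIndependentOfCardEqFinrank hli hcard
  have hB : ⇑B = ![v, w] := coe_basisOfLinearIndependentOfCardEqFinrank hli hcard
  set f : ℂ →ₗ[ℝ] ℝ := B.coord 1 with hf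
  have hfm : ∀ x : ℂ, f.toAddMonoidHom x = f x := fun _ => rfl
  have hfv : f v = 0 := by
    have : f (B 0) = 0 := by
      simp [hf, Module.Basis.coord_apply, Module.Basis.repr_self]
    simpa [hB] using this
  have hfw : f w = 1 := by
    have : f (B 1) = 1 := by
      simp [hf, Module.Basis.coord_apply, Module.Basis.repr_self]
    simpa [hB] using this
  have hfℓ : ∀ x ∈ ℓ, f x = 0 := by
    intro x hx
    obtain ⟨c, rfl⟩ := hmemℓ x hx
    rw [map_smul, hfv, smul_zero]
  have hker : ∀ x : ℂ, f x = 0 → x ∈ ℓ := by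
    intro x hx
    have hrepr : B.repr x 0 • v + B.repr x 1 • w = x := by
      have := B.sum_repr x
      rwa [Fin.sum_univ_two, hB] at this
    have h1 : B.repr x 1 = 0 := hx
    rw [h1, zero_smul, add_zero] at hrepr
    rw [← hrepr]
    exact ℓ.smul_mem _ hvℓ
  have hfc : Continuous f := f.continuous_of_finiteDimensional
  -- subgroups S k
  set S : Fin n → AddSubgroup ℂ := fun k => ℓ.toAddSubgroup ⊔ AddSubgroup.closure {w} ⊔ G k
    with hS
  have hwS : ∀ k, w ∈ S k :=
    fun k => le_sup_left (α := AddSubgroup ℂ)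
      (le_sup_right (α := AddSubgroup ℂ) (AddSubgroup.subset_closure rfl))
  -- each image subgroup is cyclic
  have hcyc : ∀ k : Fin n, ∃ m : ℤ, m ≠ 0 ∧
      AddSubgroup.map f.toAddMonoidHom (S k) ≤ AddSubgroup.zmultiples ((m : ℝ)⁻¹) := by
    intro k
    rcases AddSubgroup.dense_or_cyclic (AddSubgroup.map f.toAddMonoidHom (S k)) with hd | ⟨a, ha⟩
    · exfalso
      apply h k
      have hdS : Dense ((S k : AddSubgroup ℂ) : Set ℂ) := by
        apply aux_dense f w hfw
        · intro x hx
          exact le_sup_left (α := AddSubgroup ℂ) (le_sup_left (α := AddSubgroup ℂ) (hker x hx))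
        · simpa [AddSubgroup.coe_map] using hd
      rw [SetLike.ext'_iff, AddSubgroup.topologicalClosure_coe, AddSubgroup.coe_top]
      exact hdS.closure_eq
    · rw [← AddSubgroup.zmultiples_eq_closure] at ha
      have h1 : (1 : ℝ) ∈ AddSubgroup.zmultiples a := by
        rw [← ha]
        exact ⟨w, hwS k, hfw⟩
      obtain ⟨m, hm⟩ := AddSubgroup.mem_zmultiples_iff.mp h1
      have hm0 : m ≠ 0 := by
        rintro rfl
        simp at hm
      refine ⟨m, hm0, ?_⟩
      rw [ha]
      have haa : a = (m : ℝ)⁻¹ := by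
        have hmr : (m : ℝ) ≠ 0 := Int.cast_ne_zero.mpr hm0
        rw [zsmul_eq_mul] at hm
        field_simp
        linarith [hm]
      rw [haa]
  choose m hm0 hmle using hcyc
  set N : ℤ := ∏ k, m k with hN
  have hN0 : N ≠ 0 := Finset.prod_ne_zero_iff.mpr fun k _ => hm0 k
  have hNr : (N : ℝ) ≠ 0 := Int.cast_ne_zero.mpr hN0
  -- each zmultiples (m k)⁻¹ ≤ zmultiples N⁻¹
  have hsub : ∀ k, AddSubgroup.zmultiples ((m k : ℝ)⁻¹) ≤ AddSubgroup.zmultiples ((N : ℝ)⁻¹) := by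
    intro k
    have hdvd : m k ∣ N := Finset.dvd_prod_of_mem m (Finset.mem_univ k)
    obtain ⟨c, hc⟩ := hdvd
    rintro x ⟨j, rfl⟩
    refine ⟨j * c, ?_⟩
    have hmk : (m k : ℝ) ≠ 0 := Int.cast_ne_zero.mpr (hm0 k)
    have hcr : (c : ℝ) ≠ 0 := by
      intro hh
      apply hNr
      rw [hc]
      push_cast
      rw [hh, mul_zero]
    have hNc : (N : ℝ) = (m k : ℝ) * (c : ℝ) := by rw [hc]; push_cast; ring
    simp only [zsmul_eq_mul]
    push_cast
    rw [hNc]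
    field_simp
  -- the big subgroup lands inside comap of zmultiples N⁻¹
  set C : AddSubgroup ℂ := AddSubgroup.comap f.toAddMonoidHom
    (AddSubgroup.zmultiples ((N : ℝ)⁻¹)) with hC
  have hle : ℓ.toAddSubgroup ⊔ AddSubgroup.closure {w} ⊔ ⨆ k, G k ≤ C := by
    refine sup_le (sup_le ?_ ?_) (iSup_le fun k => ?_)
    · intro x hx
      refine AddSubgroup.mem_comap.mpr ?_
      rw [hfm, hfℓ x hx]
      exact zero_mem _
    · rw [AddSubgroup.closure_le, Set.singleton_subset_iff]
      refine AddSubgroup.mem_comap.mpr ?_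
      rw [hfm, hfw]
      exact ⟨N, by show (N : ℤ) • ((N : ℝ))⁻¹ = 1; rw [zsmul_eq_mul]; field_simp⟩
    · intro x hx
      have hxS : x ∈ S k := le_sup_right (α := AddSubgroup ℂ) hx
      exact AddSubgroup.mem_comap.mpr (hsub k (hmle k ⟨x, hxS, rfl⟩))
  -- C is closed and proper, hence no density
  intro hdense
  have hCclosed : IsClosed (C : Set ℂ) := by
    have hcl : IsClosed ((AddSubgroup.zmultiples ((N : ℝ)⁻¹) : AddSubgroup ℝ) : Set ℝ) :=
      AddSubgroup.isClosed_of_discrete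
    exact hcl.preimage hfc
  have hCuniv : (C : Set ℂ) = Set.univ := by
    apply Set.eq_univ_of_univ_subset
    rw [← hdense.closure_eq]
    exact closure_minimal hle hCclosed
  -- but (2N)⁻¹ • w is not in C
  have hmem : ((2 * (N : ℝ))⁻¹) • w ∈ (C : Set ℂ) := by rw [hCuniv]; trivial
  obtain ⟨j, hj⟩ := AddSubgroup.mem_zmultiples_iff.mp (AddSubgroup.mem_comap.mp hmem)
  rw [zsmul_eq_mul, hfm, map_smul, hfw, smul_eq_mul, mul_one] at hj
  -- hj : (j : ℝ) * (N : ℝ)⁻¹ = (2 * N)⁻¹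
  have h2 : ((2 * j : ℤ) : ℝ) = 1 := by
    push_cast
    have h3 : (2 : ℝ) * ((j : ℝ) * (N : ℝ)⁻¹) * (N : ℝ)
        = 2 * (2 * (N : ℝ))⁻¹ * (N : ℝ) := by rw [hj]
    field_simp at h3
    linarith
  have h4 : (2 * j : ℤ) = 1 := by exact_mod_cast h2
  omega
end

section
/- Let g ≥ 4 and a > 0. Let Δ = {(b₁, …, b_g) ∈ ℝ^g : b_j > 0 for all j and b₁ + ⋯ + b_g = a}. Let ∼ be the equivalence relation on Δ generated by the relation: (b₁, …, b_g) is related to (b₁′, …, b_g′) whenever b_j′ = b_j for some j with 2 ≤ j ≤ g. Then ∼ has exactly one equivalence class, i.e., any two elements of Δ are equivalent. -/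
section Aux

variable (g : ℕ) (hg : 4 ≤ g) (a : ℝ)

/-- The point with coordinate 1 equal to `s`, coordinate 2 equal to `t`,
and the rest of the mass spread evenly. -/
noncomputable def simplexMk (s t : ℝ) : Fin g → ℝ :=
  fun j => (a - s - t) / (g - 2)
    + (if j = (⟨1, by omega⟩ : Fin g) then s - (a - s - t) / (g - 2) else 0)
    + (if j = (⟨2, by omega⟩ : Fin g) then t - (a - s - t) / (g - 2) else 0)

lemma simplexMk_mem (s t : ℝ) (hs : 0 < s) (ht : 0 < t) (hst : s + t < a) :
    (∀ j, 0 < simplexMk g hg a s t j) ∧ ∑ j, simplexMk g hg a s t j = a := by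
  have hg2 : (0:ℝ) < (g:ℝ) - 2 := by
    have : (4:ℝ) ≤ (g:ℝ) := by exact_mod_cast hg
    linarith
  have hc : 0 < (a - s - t) / (g - 2) := by
    apply div_pos <;> linarith
  set c := (a - s - t) / (g - 2) with hcdef
  have hne : (⟨1, by omega⟩ : Fin g) ≠ (⟨2, by omega⟩ : Fin g) := by
    simp [Fin.ext_iff]
  constructor
  · intro j
    unfold simplexMk
    by_cases h1 : j = (⟨1, by omega⟩ : Fin g)
    · subst h1; simp [hne, ← hcdef]; linarith
    · by_cases h2 : j = (⟨2, by omega⟩ : Fin g)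
      · subst h2; simp [Ne.symm hne, ← hcdef]; linarith
      · simp [h1, h2, ← hcdef]; linarith
  · unfold simplexMk
    rw [← hcdef]
    rw [Finset.sum_add_distrib, Finset.sum_add_distrib, Finset.sum_const,
      Finset.sum_ite_eq' Finset.univ (⟨1, by omega⟩ : Fin g),
      Finset.sum_ite_eq' Finset.univ (⟨2, by omega⟩ : Fin g)]
    simp only [Finset.mem_univ, if_true, Finset.card_univ, Fintype.card_fin,
      nsmul_eq_mul]
    have : (g:ℝ) * c - 2 * c = a - s - t := by
      rw [hcdef]; field_simp
    linarith

end Aux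

/-- For `g ≥ 4`, the equivalence relation on the open simplex
`Δ = {b ∈ ℝ^g : bⱼ > 0, ∑ bⱼ = a}` generated by relating tuples that agree in some
coordinate `j` with `2 ≤ j ≤ g` has exactly one equivalence class. -/
theorem stmt7 (g : ℕ) (hg : 4 ≤ g) (a : ℝ) (ha : 0 < a)
    (x y : {b : Fin g → ℝ // (∀ j, 0 < b j) ∧ ∑ j, b j = a}) :
    Relation.EqvGen (fun u v : {b : Fin g → ℝ // (∀ j, 0 < b j) ∧ ∑ j, b j = a} =>
      ∃ j : Fin g, j.val ≠ 0 ∧ u.1 j = v.1 j) x y := by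
  set i1 : Fin g := ⟨1, by omega⟩ with hi1
  set i2 : Fin g := ⟨2, by omega⟩ with hi2
  -- each coordinate is strictly less than a
  have hlt : ∀ z : {b : Fin g → ℝ // (∀ j, 0 < b j) ∧ ∑ j, b j = a}, z.1 i2 < a := by
    intro z
    have := Finset.single_lt_sum (i := i2) (j := i1) (f := z.1)
      (by simp [hi1, hi2, Fin.ext_iff]) (Finset.mem_univ _) (Finset.mem_univ _)
      (z.2.1 i1) (fun k _ _ => (z.2.1 k).le)
    rw [z.2.2] at this
    exact this
  set ε : ℝ := min (a - x.1 i2) (a - y.1 i2) / 2 with hε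
  have hεpos : 0 < ε := by
    have hx := hlt x; have hy := hlt y
    apply div_pos _ two_pos
    exact lt_min (by linarith) (by linarith)
  have hεx : ε + x.1 i2 < a := by
    have : ε ≤ (a - x.1 i2) / 2 := by
      have := min_le_left (a - x.1 i2) (a - y.1 i2); rw [hε]; linarith
    have hx := hlt x; linarith
  have hεy : ε + y.1 i2 < a := by
    have : ε ≤ (a - y.1 i2) / 2 := by
      have := min_le_right (a - x.1 i2) (a - y.1 i2); rw [hε]; linarith
    have hy := hlt y; linarith
  have hp := simplexMk_mem g hg a ε (x.1 i2) hεpos (x.2.1 i2) (by linarith)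
  have hq := simplexMk_mem g hg a ε (y.1 i2) hεpos (y.2.1 i2) (by linarith)
  set p : {b : Fin g → ℝ // (∀ j, 0 < b j) ∧ ∑ j, b j = a} := ⟨_, hp⟩ with hpd
  set q : {b : Fin g → ℝ // (∀ j, 0 < b j) ∧ ∑ j, b j = a} := ⟨_, hq⟩ with hqd
  have hne : i1 ≠ i2 := by simp [hi1, hi2, Fin.ext_iff]
  have pmk1 : p.1 i1 = ε := by
    simp [hpd, simplexMk, ← hi1, ← hi2, hne]
  have pmk2 : p.1 i2 = x.1 i2 := by
    simp [hpd, simplexMk, ← hi1, ← hi2, Ne.symm hne]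
  have qmk1 : q.1 i1 = ε := by
    simp [hqd, simplexMk, ← hi1, ← hi2, hne]
  have qmk2 : q.1 i2 = y.1 i2 := by
    simp [hqd, simplexMk, ← hi1, ← hi2, Ne.symm hne]
  apply Relation.EqvGen.trans _ p _ (Relation.EqvGen.rel _ _ ⟨i2, by simp [hi2], pmk2.symm⟩)
  apply Relation.EqvGen.trans _ q _ (Relation.EqvGen.rel _ _ ⟨i1, by simp [hi1], by rw [pmk1, qmk1]⟩)
  exact Relation.EqvGen.rel _ _ ⟨i2, by simp [hi2], qmk2⟩
end

section
/- Let g ≥ 4. Let 𝒫 be the set of g-tuples (m₁, …, m_g) of positive integers with gcd(m₁, …, m_g) = 1. Let ∼ be the equivalence relation on 𝒫 generated by the relation: (n₁, …, n_g) is related to (n₁′, …, n_g′) whenever there exists j with 2 ≤ j ≤ g such that n_j′ = n_j and gcd_{k ≠ j} n_k′ = gcd_{k ≠ j} n_k. Then every element of 𝒫 is equivalent to (1, 1, …, 1); in particular ∼ has exactly one equivalence class. -/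
/-- The set `𝒫` of `g`-tuples of positive integers with gcd `1`. -/
def TupleP (g : ℕ) := {m : Fin g → ℕ // (∀ j, 0 < m j) ∧ Finset.univ.gcd m = 1}

/-- The generating relation: `u` and `v` are related if there is `j` with `2 ≤ j ≤ g`
(`j.val ≠ 0` in `0`-based indexing) such that `u_j = v_j` and the gcd of the entries of `u`
other than the `j`-th equals the gcd of the entries of `v` other than the `j`-th. -/
def RelP (g : ℕ) (u v : TupleP g) : Prop :=
  ∃ j : Fin g, j.val ≠ 0 ∧ u.1 j = v.1 j ∧
    (Finset.univ.erase j).gcd u.1 = (Finset.univ.erase j).gcd v.1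

/-! Write `d` for the gcd of the entries of `n` other than `n₂`, so that `gcd(n₂, d) = 1`.
Keeping the second entry fixed, `n` is related to `(d, n₂, d, …, d)`; keeping the third entry `d`
fixed, this is related to `(1, 1, d, 1, …, 1)`, since in both the remaining entries have gcd `1`;
keeping the second entry fixed again leads to `(1, …, 1)`. -/

open Finset Function

namespace Finset

variable {ι : Type*}

theorem gcd_const_nat {s : Finset ι} (hs : s.Nonempty) (c : ℕ) : s.gcd (fun _ => c) = c :=
  Nat.dvd_antisymm (gcd_dvd hs.choose_spec) (dvd_gcd fun _ _ => dvd_rfl)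

theorem gcd_pos_of_pos {s : Finset ι} {f : ι → ℕ} (hs : s.Nonempty) (hf : ∀ i, 0 < f i) :
    0 < s.gcd f :=
  Nat.pos_of_ne_zero (gcd_ne_zero_iff.mpr ⟨_, hs.choose_spec, (hf _).ne'⟩)

variable [DecidableEq ι]

theorem gcd_update_const_of_notMem {s : Finset ι} {j : ι} (hj : j ∉ s) (hs : s.Nonempty)
    (a c : ℕ) : s.gcd (update (fun _ => c) j a) = c := by
  rw [gcd_congr rfl fun i hi => update_of_ne (ne_of_mem_of_not_mem hi hj) a (fun _ => c),
    gcd_const_nat hs]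

theorem gcd_update_const_of_mem {s : Finset ι} {j : ι} (hj : j ∈ s) (hs : (s.erase j).Nonempty)
    (a c : ℕ) : s.gcd (update (fun _ => c) j a) = Nat.gcd a c := by
  rw [← insert_erase hj, gcd_insert, update_self,
    gcd_update_const_of_notMem (notMem_erase j s) hs]
  rfl

variable [Fintype ι]

theorem gcd_univ_eq_gcd_apply_gcd_erase (f : ι → ℕ) (j : ι) :
    univ.gcd f = Nat.gcd (f j) ((univ.erase j).gcd f) := by
  have h := gcd_insert (s := univ.erase j) (f := f) (b := j)
  rwa [insert_erase (mem_univ j)] at h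

theorem univ_erase_nonempty (h : 2 ≤ Fintype.card ι) (j : ι) : (univ.erase j).Nonempty := by
  rw [← card_pos, card_erase_of_mem (mem_univ j), card_univ]
  omega

theorem univ_erase_erase_nonempty (h : 3 ≤ Fintype.card ι) {j k : ι} (hjk : j ≠ k) :
    ((univ.erase k).erase j).Nonempty := by
  rw [← card_pos, card_erase_of_mem (mem_erase.mpr ⟨hjk, mem_univ j⟩),
    card_erase_of_mem (mem_univ k), card_univ]
  omega

theorem gcd_univ_update_const (h : 2 ≤ Fintype.card ι) (j : ι) (a c : ℕ) :
    univ.gcd (update (fun _ => c) j a) = Nat.gcd a c :=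
  gcd_update_const_of_mem (mem_univ j) (univ_erase_nonempty h j) a c

theorem gcd_erase_update_const_self (h : 2 ≤ Fintype.card ι) (j : ι) (a c : ℕ) :
    (univ.erase j).gcd (update (fun _ => c) j a) = c :=
  gcd_update_const_of_notMem (notMem_erase j _) (univ_erase_nonempty h j) a c

theorem gcd_erase_update_const_of_ne (h : 3 ≤ Fintype.card ι) {j k : ι} (hjk : j ≠ k)
    (a c : ℕ) : (univ.erase k).gcd (update (fun _ => c) j a) = Nat.gcd a c :=
  gcd_update_const_of_mem (mem_erase.mpr ⟨hjk, mem_univ j⟩) (univ_erase_erase_nonempty h hjk) a c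

end Finset

theorem update_const_mem_tupleP {g : ℕ} (hg : 2 ≤ g) (j : Fin g) {a c : ℕ} (ha : 0 < a)
    (hc : 0 < c) (hac : Nat.gcd a c = 1) :
    (∀ i, 0 < update (fun _ => c) j a i) ∧ univ.gcd (update (fun _ => c) j a) = 1 := by
  refine ⟨fun i => ?_, by rwa [gcd_univ_update_const (by simpa using hg)]⟩
  rcases eq_or_ne i j with rfl | hij
  · rwa [update_self]
  · rwa [update_of_ne hij]

/-- For `g ≥ 4`, every element of `𝒫` is equivalent to `(1, …, 1)` under the equivalence
relation generated by `RelP`; in particular there is exactly one equivalence class. -/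
theorem stmt8 (g : ℕ) (hg : 4 ≤ g) :
    ∃ y : TupleP g, y.1 = (fun _ => 1) ∧ ∀ x : TupleP g, Relation.EqvGen (RelP g) x y := by
  have hcard : 3 ≤ Fintype.card (Fin g) := by simp only [Fintype.card_fin]; omega
  let j₁ : Fin g := ⟨1, by omega⟩
  let j₂ : Fin g := ⟨2, by omega⟩
  have h₁₂ : j₁ ≠ j₂ := Fin.ne_of_val_ne (show 1 ≠ 2 by decide)
  let one : TupleP g := ⟨fun _ => 1, fun _ => one_pos, gcd_const_nat ⟨j₁, mem_univ _⟩ 1⟩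
  refine ⟨one, rfl, fun x => ?_⟩
  set d := (univ.erase j₁).gcd x.1
  have hd : 0 < d := gcd_pos_of_pos ⟨j₂, mem_erase.mpr ⟨h₁₂.symm, mem_univ _⟩⟩ x.2.1
  have hcop : Nat.gcd (x.1 j₁) d = 1 := (gcd_univ_eq_gcd_apply_gcd_erase x.1 j₁).symm.trans x.2.2
  let v : TupleP g := ⟨update (fun _ => d) j₁ (x.1 j₁),
    update_const_mem_tupleP (by omega) j₁ (x.2.1 j₁) hd hcop⟩
  let w : TupleP g := ⟨update (fun _ => 1) j₂ d,
    update_const_mem_tupleP (by omega) j₂ hd one_pos (Nat.gcd_one_right d)⟩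
  have hxv : RelP g x v := ⟨j₁, one_ne_zero, (update_self j₁ (x.1 j₁) fun _ => d).symm,
    (gcd_erase_update_const_self (by omega) ..).symm⟩
  have hvw : RelP g v w := ⟨j₂, two_ne_zero,
    (update_of_ne h₁₂.symm (x.1 j₁) fun _ => d).trans (update_self j₂ d fun _ => 1).symm, by
    rw [gcd_erase_update_const_of_ne hcard h₁₂, hcop, gcd_erase_update_const_self (by omega)]⟩
  have hw1 : RelP g w one := ⟨j₁, one_ne_zero, update_of_ne h₁₂ d fun _ => 1, by
    rw [gcd_erase_update_const_of_ne hcard h₁₂.symm, Nat.gcd_one_right,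
      gcd_const_nat ⟨j₂, mem_erase.mpr ⟨h₁₂.symm, mem_univ _⟩⟩]⟩
  exact .trans _ _ _ (.rel _ _ hxv) (.trans _ _ _ (.rel _ _ hvw) (.rel _ _ hw1))
end

section
/- Let M ≥ 1 be an integer and let a₁, …, a_M and w₁, …, w_M be positive real numbers. The set S = {(t(a₁ + n₁w₁), …, t(a_M + n_Mw_M)) : t ∈ ℝ, t > 0, and n₁, …, n_M are positive integers} is dense in (ℝ_{>0})^M, the set of M-tuples of positive reals with the subspace topology from ℝ^M. -/
/-!
Given a target `x` and a tolerance `ε`, take `t > 0` so small that `t wₖ < ε` and `t aₖ < xₖ` for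
every `k`. Along each coordinate the points `t (aₖ + n wₖ)` then form an arithmetic progression of
step `t wₖ < ε` whose `n = 0` term lies below `xₖ`, so rounding `(xₖ - t aₖ) / (t wₖ)` up to a natural number
`nₖ ≥ 1` lands within `ε` of `xₖ`, on the right of it, hence in the positive orthant.
-/

open Filter Topology

lemma exists_pos_nat_mul_add_mem_Ico {a w t x : ℝ} (hw : 0 < w) (ht : 0 < t) (hx : t * a < x) :
    ∃ n : ℕ, 0 < n ∧ t * (a + n * w) ∈ Set.Ico x (x + t * w) := by
  have htw : 0 < t * w := mul_pos ht hw
  set c := (x - t * a) / (t * w)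
  have hc : 0 < c := div_pos (sub_pos.mpr hx) htw
  have hx_eq : x = t * (a + c * w) := by
    simp only [c]
    field_simp
    ring
  refine ⟨⌈c⌉₊, Nat.ceil_pos.mpr hc, ?_, ?_⟩
  · rw [hx_eq]
    nlinarith [Nat.le_ceil c]
  · rw [hx_eq]
    nlinarith [Nat.ceil_lt_add_one hc.le]

lemma eventually_nhdsGT_zero_mul_lt {ι : Type*} [Finite ι] {a w x : ι → ℝ} (hx : ∀ k, 0 < x k)
    {ε : ℝ} (hε : 0 < ε) : ∀ᶠ t in 𝓝[>] (0 : ℝ), ∀ k, t * a k < x k ∧ t * w k < ε := by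
  refine eventually_all.mpr fun k => nhdsWithin_le_nhds ?_
  have hlim (c : ℝ) : Tendsto (fun t : ℝ => t * c) (𝓝 0) (𝓝 0) := by
    simpa using (continuous_mul_const c).tendsto 0
  exact ((hlim (a k)).eventually (gt_mem_nhds (hx k))).and
    ((hlim (w k)).eventually (gt_mem_nhds hε))

lemma exists_scaled_progression_mem_Ico {ι : Type*} [Finite ι] (a : ι → ℝ) {w x : ι → ℝ}
    (hw : ∀ k, 0 < w k) (hx : ∀ k, 0 < x k) {ε : ℝ} (hε : 0 < ε) :
    ∃ t : ℝ, 0 < t ∧ ∃ n : ι → ℕ, (∀ k, 0 < n k) ∧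
      ∀ k, t * (a k + n k * w k) ∈ Set.Ico (x k) (x k + ε) := by
  obtain ⟨t, hsmall, ht⟩ :=
    ((eventually_nhdsGT_zero_mul_lt (a := a) (w := w) hx hε).and self_mem_nhdsWithin).exists
  choose n hn hmem using fun k => exists_pos_nat_mul_add_mem_Ico (hw k) ht (hsmall k).1
  exact ⟨t, ht, n, hn, fun k => ⟨(hmem k).1, (hmem k).2.trans (by linarith [(hsmall k).2])⟩⟩

theorem stmt13_general (M : ℕ) (a w : Fin M → ℝ)
    (hw : ∀ k, 0 < w k) :
    Dense {y : {x : Fin M → ℝ // ∀ k, 0 < x k} |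
      ∃ t : ℝ, 0 < t ∧ ∃ n : Fin M → ℕ, (∀ k, 0 < n k) ∧
        ∀ k, y.1 k = t * (a k + n k * w k)} := by
  rw [Metric.dense_iff]
  intro x ε hε
  obtain ⟨t, ht, n, hn, hmem⟩ := exists_scaled_progression_mem_Ico a hw x.2 hε
  refine ⟨⟨fun k => t * (a k + n k * w k), fun k => (x.2 k).trans_le (hmem k).1⟩, ?_,
    t, ht, n, hn, fun k => rfl⟩
  rw [Metric.mem_ball, Subtype.dist_eq, dist_pi_lt_iff hε]
  intro k
  rw [Real.dist_eq, abs_sub_lt_iff]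
  constructor <;> linarith [(hmem k).1, (hmem k).2]

/-- For positive reals `a₁, …, a_M` and `w₁, …, w_M`, the set
`S = {(t(a₁ + n₁w₁), …, t(a_M + n_Mw_M)) : t > 0, nₖ ∈ ℤ_{>0}}` is dense in `(ℝ_{>0})^M`. -/
theorem stmt13 (M : ℕ) (hM : 1 ≤ M) (a w : Fin M → ℝ)
    (ha : ∀ k, 0 < a k) (hw : ∀ k, 0 < w k) :
    Dense {y : {x : Fin M → ℝ // ∀ k, 0 < x k} |
      ∃ t : ℝ, 0 < t ∧ ∃ n : Fin M → ℕ, (∀ k, 0 < n k) ∧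
        ∀ k, y.1 k = t * (a k + n k * w k)} :=
  stmt13_general M a w hw
end

section
/- Let w₀, w₁, w₂ be positive real numbers such that 1/w₀, 1/w₁, 1/w₂ are linearly independent over ℚ. Then the set {(t + w₀ℤ, −t + w₁ℤ, −t + w₂ℤ) : t ∈ ℝ} is dense in the product (ℝ/w₀ℤ) × (ℝ/w₁ℤ) × (ℝ/w₂ℤ) of additive circles. -/
open MeasureTheory Complex Filter Set Topology AddCircle

set_option maxHeartbeats 1000000
set_option synthInstance.maxHeartbeats 400000

namespace Stmt14Aux

variable (w₀ w₁ w₂ : ℝ)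

/-- The flow line. -/
noncomputable def φ (t : ℝ) : AddCircle w₀ × AddCircle w₁ × AddCircle w₂ :=
  (↑t, ↑(-t), ↑(-t))

lemma continuous_φ : Continuous (φ w₀ w₁ w₂) := by
  refine Continuous.prodMk ?_ (Continuous.prodMk ?_ ?_)
  · exact AddCircle.continuous_mk' w₀
  · exact (AddCircle.continuous_mk' w₁).comp continuous_neg
  · exact (AddCircle.continuous_mk' w₂).comp continuous_neg

/-- Characters of the 3-torus. -/
noncomputable def char (m : ℤ × ℤ × ℤ) :
    C(AddCircle w₀ × AddCircle w₁ × AddCircle w₂, ℂ) :=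
  ⟨fun x => fourier m.1 x.1 * (fourier m.2.1 x.2.1 * fourier m.2.2 x.2.2),
    (((fourier m.1).continuous.comp continuous_fst).mul
      ((((fourier m.2.1).continuous.comp continuous_fst).comp continuous_snd).mul
        (((fourier m.2.2).continuous.comp continuous_snd).comp continuous_snd)))⟩

lemma char_apply (m : ℤ × ℤ × ℤ) (x) :
    char w₀ w₁ w₂ m x = fourier m.1 x.1 * (fourier m.2.1 x.2.1 * fourier m.2.2 x.2.2) := rfl

lemma char_zero_eq : char w₀ w₁ w₂ 0 = 1 := by
  ext1 z
  simp [char_apply, fourier_zero]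

lemma char_add_eq (m n : ℤ × ℤ × ℤ) :
    char w₀ w₁ w₂ (m + n) = char w₀ w₁ w₂ m * char w₀ w₁ w₂ n := by
  ext1 z
  simp only [char_apply, ContinuousMap.mul_apply, Prod.fst_add, Prod.snd_add, fourier_add]
  ring

/-- The star subalgebra generated by the characters. -/
noncomputable def charAlg : StarSubalgebra ℂ
    C(AddCircle w₀ × AddCircle w₁ × AddCircle w₂, ℂ) where
  toSubalgebra := Algebra.adjoin ℂ (Set.range (char w₀ w₁ w₂))
  star_mem' := by
    show Algebra.adjoin ℂ (Set.range (char w₀ w₁ w₂)) ≤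
      star (Algebra.adjoin ℂ (Set.range (char w₀ w₁ w₂)))
    refine Algebra.adjoin_le ?_
    rintro - ⟨m, rfl⟩
    refine Algebra.subset_adjoin ⟨-m, ?_⟩
    ext1 z
    simp only [char_apply, Prod.fst_neg, Prod.snd_neg, fourier_neg]
    simp [ContinuousMap.star_apply, char_apply]

lemma charAlg_coe :
    Subalgebra.toSubmodule (charAlg w₀ w₁ w₂).toSubalgebra
      = Submodule.span ℂ (Set.range (char w₀ w₁ w₂)) := by
  apply Algebra.adjoin_eq_span_of_subset
  refine Subset.trans ?_ Submodule.subset_span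
  intro x hx
  refine Submonoid.closure_induction (fun _ h => h) ⟨0, (char_zero_eq w₀ w₁ w₂)⟩ ?_ hx
  rintro - - - - ⟨m, rfl⟩ ⟨n, rfl⟩
  exact ⟨m + n, char_add_eq w₀ w₁ w₂ m n⟩

variable [Fact (0 < w₀)] [Fact (0 < w₁)] [Fact (0 < w₂)]

lemma charAlg_separatesPoints : (charAlg w₀ w₁ w₂).SeparatesPoints := by
  intro x y hxy
  by_cases hc1 : x.1 = y.1
  · by_cases hc2 : x.2.1 = y.2.1
    · have hc3 : x.2.2 ≠ y.2.2 := fun h3 => hxy (Prod.ext hc1 (Prod.ext hc2 h3))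
      refine ⟨_, ⟨char w₀ w₁ w₂ (0, 0, 1), Algebra.subset_adjoin ⟨(0, 0, 1), rfl⟩, rfl⟩, ?_⟩
      simp only [char_apply, fourier_zero, fourier_one, one_mul, mul_one]
      intro h
      rw [Circle.coe_inj] at h
      exact hc3 (injective_toCircle (Fact.out (p := 0 < w₂)).ne' h)
    · refine ⟨_, ⟨char w₀ w₁ w₂ (0, 1, 0), Algebra.subset_adjoin ⟨(0, 1, 0), rfl⟩, rfl⟩, ?_⟩
      simp only [char_apply, fourier_zero, fourier_one, one_mul, mul_one]
      intro h
      rw [Circle.coe_inj] at h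
      exact hc2 (injective_toCircle (Fact.out (p := 0 < w₁)).ne' h)
  · refine ⟨_, ⟨char w₀ w₁ w₂ (1, 0, 0), Algebra.subset_adjoin ⟨(1, 0, 0), rfl⟩, rfl⟩, ?_⟩
    simp only [char_apply, fourier_zero, fourier_one, one_mul, mul_one]
    intro h
    rw [Circle.coe_inj] at h
    exact hc1 (injective_toCircle (Fact.out (p := 0 < w₀)).ne' h)

lemma span_char_closure_eq_top :
    (Submodule.span ℂ (Set.range (char w₀ w₁ w₂))).topologicalClosure = ⊤ := by
  rw [← charAlg_coe]
  exact congr_arg (Subalgebra.toSubmodule <| StarSubalgebra.toSubalgebra ·)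
    (ContinuousMap.starSubalgebra_topologicalClosure_eq_top_of_separatesPoints _
      (charAlg_separatesPoints w₀ w₁ w₂))

/-- The Haar probability measure on the product torus. -/
noncomputable def μ3 : Measure (AddCircle w₀ × AddCircle w₁ × AddCircle w₂) :=
  (haarAddCircle : Measure (AddCircle w₀)).prod
    ((haarAddCircle : Measure (AddCircle w₁)).prod (haarAddCircle : Measure (AddCircle w₂)))

instance : IsProbabilityMeasure (μ3 w₀ w₁ w₂) := by unfold μ3; infer_instance

instance : (μ3 w₀ w₁ w₂).IsOpenPosMeasure := by unfold μ3; infer_instance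

lemma integral_fourier_aux {T : ℝ} [hT : Fact (0 < T)] (n : ℤ) :
    (∫ x : AddCircle T, fourier n x ∂(haarAddCircle : Measure (AddCircle T)))
      = if n = 0 then 1 else 0 := by
  split_ifs with h
  · subst h
    have : (fun x : AddCircle T => (fourier 0 x : ℂ)) = fun _ => (1 : ℂ) :=
      funext fun x => fourier_zero
    rw [this, integral_const, probReal_univ]
    simp
  · exact integral_eq_zero_of_add_right_eq_neg (μ := haarAddCircle)
      (fourier_add_half_inv_index h hT.out)

lemma integral_char_eq_zero {m : ℤ × ℤ × ℤ} (hm : m ≠ 0) :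
    ∫ x, char w₀ w₁ w₂ m x ∂(μ3 w₀ w₁ w₂) = 0 := by
  have key : ∫ x, char w₀ w₁ w₂ m x ∂(μ3 w₀ w₁ w₂)
      = (∫ x : AddCircle w₀, fourier m.1 x ∂haarAddCircle)
        * ((∫ x : AddCircle w₁, fourier m.2.1 x ∂haarAddCircle)
          * (∫ x : AddCircle w₂, fourier m.2.2 x ∂haarAddCircle)) := by
    have h1 := integral_prod_mul (L := ℂ) (μ := (haarAddCircle : Measure (AddCircle w₀)))
      (ν := ((haarAddCircle : Measure (AddCircle w₁)).prod
        (haarAddCircle : Measure (AddCircle w₂))))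
      (fun a => (fourier m.1 a : ℂ))
      (fun b => (fourier m.2.1 b.1 : ℂ) * (fourier m.2.2 b.2 : ℂ))
    have h2 := integral_prod_mul (L := ℂ) (μ := (haarAddCircle : Measure (AddCircle w₁)))
      (ν := (haarAddCircle : Measure (AddCircle w₂)))
      (fun a => (fourier m.2.1 a : ℂ)) (fun b => (fourier m.2.2 b : ℂ))
    rw [μ3]
    exact h1.trans (by rw [h2])
  rw [key]
  rw [integral_fourier_aux, integral_fourier_aux, integral_fourier_aux]
  have : ¬(m.1 = 0 ∧ m.2.1 = 0 ∧ m.2.2 = 0) := by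
    intro ⟨a, b, c⟩; exact hm (Prod.ext a (Prod.ext b c))
  by_cases h1 : m.1 = 0 <;> by_cases h2 : m.2.1 = 0 <;> by_cases h3 : m.2.2 = 0 <;>
    simp_all

lemma integrable_cm (g : C(AddCircle w₀ × AddCircle w₁ × AddCircle w₂, ℂ)) :
    Integrable g (μ3 w₀ w₁ w₂) :=
  g.continuous.integrable_of_hasCompactSupport (HasCompactSupport.of_compactSpace _)

lemma intervalIntegrable_cm (g : C(AddCircle w₀ × AddCircle w₁ × AddCircle w₂, ℂ))
    (a b : ℝ) : IntervalIntegrable (fun t => g (φ w₀ w₁ w₂ t)) volume a b :=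
  (g.continuous.comp (continuous_φ w₀ w₁ w₂)).intervalIntegrable a b

lemma char_φ_eq (m : ℤ × ℤ × ℤ) (t : ℝ) :
    char w₀ w₁ w₂ m (φ w₀ w₁ w₂ t)
      = Complex.exp (((2 * Real.pi * ((m.1 : ℝ) / w₀ - (m.2.1 : ℝ) / w₁ - (m.2.2 : ℝ) / w₂)
          : ℝ) : ℂ) * Complex.I * t) := by
  have hw₀ : w₀ ≠ 0 := (Fact.out (p := 0 < w₀)).ne'
  have hw₁ : w₁ ≠ 0 := (Fact.out (p := 0 < w₁)).ne'
  have hw₂ : w₂ ≠ 0 := (Fact.out (p := 0 < w₂)).ne'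
  simp only [char_apply, φ, fourier_coe_apply]
  rw [← Complex.exp_add, ← Complex.exp_add]
  congr 1
  push_cast
  field_simp
  ring

lemma tendsto_avg_exp {a : ℝ} (ha : a ≠ 0) :
    Tendsto (fun T : ℝ => (T : ℂ)⁻¹ • ∫ t in (0:ℝ)..T,
        Complex.exp ((a : ℂ) * Complex.I * t)) atTop (𝓝 0) := by
  have hc : (a : ℂ) * Complex.I ≠ 0 :=
    mul_ne_zero (Complex.ofReal_ne_zero.mpr ha) Complex.I_ne_zero
  have ha' : 0 < |a| := abs_pos.mpr ha
  have hb : Tendsto (fun T : ℝ => (2 / |a|) / T) atTop (𝓝 (0:ℝ)) :=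
    tendsto_const_nhds.div_atTop tendsto_id
  refine squeeze_zero_norm' ?_ hb
  · filter_upwards [eventually_gt_atTop (0:ℝ)] with T hT
    have hnorm : ∀ s : ℝ, ‖Complex.exp ((a : ℂ) * Complex.I * s)‖ = 1 := by
      intro s
      have : (a : ℂ) * Complex.I * (s : ℂ) = ((a * s : ℝ) : ℂ) * Complex.I := by
        push_cast; ring
      rw [this]
      exact Complex.norm_exp_ofReal_mul_I _
    rw [integral_exp_mul_complex hc]
    rw [norm_smul]
    have hbound : ‖(Complex.exp ((a:ℂ) * Complex.I * T) - Complex.exp ((a:ℂ) * Complex.I * 0))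
        / ((a:ℂ) * Complex.I)‖ ≤ 2 / |a| := by
      rw [norm_div]
      have h1 : ‖Complex.exp ((a:ℂ) * Complex.I * T) - Complex.exp ((a:ℂ) * Complex.I * 0)‖
          ≤ 2 := by
        refine (norm_sub_le _ _).trans ?_
        rw [hnorm]
        simp only [mul_zero, Complex.exp_zero, norm_one]
        norm_num
      have h2 : ‖(a:ℂ) * Complex.I‖ = |a| := by
        rw [norm_mul, Complex.norm_I,
          Complex.norm_real, Real.norm_eq_abs, mul_one]
      rw [h2]
      gcongr
    calc ‖(T:ℂ)⁻¹‖ * ‖(Complex.exp ((a:ℂ) * Complex.I * T)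
          - Complex.exp ((a:ℂ) * Complex.I * 0)) / ((a:ℂ) * Complex.I)‖
        ≤ ‖(T:ℂ)⁻¹‖ * (2 / |a|) := by gcongr
      _ = (2 / |a|) / T := by
          rw [norm_inv, Complex.norm_real, Real.norm_eq_abs, abs_of_pos hT]
          ring

lemma tendsto_avg_char (m : ℤ × ℤ × ℤ)
    (ha : m = 0 ∨ (2 * Real.pi * ((m.1 : ℝ) / w₀ - (m.2.1 : ℝ) / w₁ - (m.2.2 : ℝ) / w₂)) ≠ 0) :
    Tendsto (fun T : ℝ => (T : ℂ)⁻¹ • ∫ t in (0:ℝ)..T, char w₀ w₁ w₂ m (φ w₀ w₁ w₂ t))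
      atTop (𝓝 (∫ x, char w₀ w₁ w₂ m x ∂(μ3 w₀ w₁ w₂))) := by
  rcases ha with rfl | ha
  · have hint : ∫ x, char w₀ w₁ w₂ 0 x ∂(μ3 w₀ w₁ w₂) = 1 := by
      rw [char_zero_eq]
      simp [measure_univ]
    rw [hint]
    have hev : ∀ᶠ T : ℝ in atTop,
        (1 : ℂ) = (T : ℂ)⁻¹ • ∫ t in (0:ℝ)..T, char w₀ w₁ w₂ 0 (φ w₀ w₁ w₂ t) := by
      filter_upwards [eventually_gt_atTop (0:ℝ)] with T hT
      rw [char_zero_eq]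
      simp only [ContinuousMap.one_apply, intervalIntegral.integral_const, sub_zero,
        smul_eq_mul, mul_one, real_smul]
      exact (inv_mul_cancel₀ (by exact_mod_cast hT.ne' : (T:ℂ) ≠ 0)).symm
    exact tendsto_const_nhds.congr' hev
  · have hm : m ≠ 0 := by
      rintro rfl
      simp at ha
    rw [integral_char_eq_zero w₀ w₁ w₂ hm]
    refine (tendsto_avg_exp ha).congr fun T => ?_
    congr 1
    refine intervalIntegral.integral_congr fun t _ => ?_
    exact (char_φ_eq w₀ w₁ w₂ m t).symm

lemma tendsto_avg_of_mem_span
    (ha : ∀ m : ℤ × ℤ × ℤ,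
      m = 0 ∨ (2 * Real.pi * ((m.1 : ℝ) / w₀ - (m.2.1 : ℝ) / w₁ - (m.2.2 : ℝ) / w₂)) ≠ 0)
    (g : C(AddCircle w₀ × AddCircle w₁ × AddCircle w₂, ℂ))
    (hg : g ∈ Submodule.span ℂ (Set.range (char w₀ w₁ w₂))) :
    Tendsto (fun T : ℝ => (T : ℂ)⁻¹ • ∫ t in (0:ℝ)..T, g (φ w₀ w₁ w₂ t))
      atTop (𝓝 (∫ x, g x ∂(μ3 w₀ w₁ w₂))) := by
  induction hg using Submodule.span_induction with
  | mem g hgm =>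
      obtain ⟨m, rfl⟩ := hgm
      exact tendsto_avg_char w₀ w₁ w₂ m (ha m)
  | zero => simpa using tendsto_const_nhds
  | add g h _ _ hg hh =>
      have e : ∀ T : ℝ, (T:ℂ)⁻¹ • ∫ t in (0:ℝ)..T, (g + h) (φ w₀ w₁ w₂ t)
          = ((T:ℂ)⁻¹ • ∫ t in (0:ℝ)..T, g (φ w₀ w₁ w₂ t))
            + ((T:ℂ)⁻¹ • ∫ t in (0:ℝ)..T, h (φ w₀ w₁ w₂ t)) := by
        intro T
        simp only [ContinuousMap.add_apply]
        rw [intervalIntegral.integral_add (intervalIntegrable_cm w₀ w₁ w₂ g 0 T)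
          (intervalIntegrable_cm w₀ w₁ w₂ h 0 T), smul_add]
      have e2 : ∫ x, (g + h) x ∂(μ3 w₀ w₁ w₂)
          = (∫ x, g x ∂(μ3 w₀ w₁ w₂)) + ∫ x, h x ∂(μ3 w₀ w₁ w₂) := by
        simp only [ContinuousMap.add_apply]
        exact integral_add (integrable_cm w₀ w₁ w₂ g) (integrable_cm w₀ w₁ w₂ h)
      rw [e2]
      exact ((hg.add hh).congr fun T => (e T).symm)
  | smul c g _ hg =>
      have e : ∀ T : ℝ, (T:ℂ)⁻¹ • ∫ t in (0:ℝ)..T, (c • g) (φ w₀ w₁ w₂ t)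
          = c • ((T:ℂ)⁻¹ • ∫ t in (0:ℝ)..T, g (φ w₀ w₁ w₂ t)) := by
        intro T
        simp only [ContinuousMap.smul_apply]
        rw [intervalIntegral.integral_smul, smul_comm]
      have e2 : ∫ x, (c • g) x ∂(μ3 w₀ w₁ w₂) = c • ∫ x, g x ∂(μ3 w₀ w₁ w₂) := by
        simp only [ContinuousMap.smul_apply]
        exact integral_smul c _
      rw [e2]
      exact ((hg.const_smul c).congr fun T => (e T).symm)


end Stmt14Aux

/-- If `1/w₀, 1/w₁, 1/w₂` are linearly independent over `ℚ`, then the orbit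
`{(t, -t, -t) : t ∈ ℝ}` of the linear flow is dense in `(ℝ/w₀ℤ) × (ℝ/w₁ℤ) × (ℝ/w₂ℤ)`. -/
theorem stmt14 (w₀ w₁ w₂ : ℝ) (h₀ : 0 < w₀) (h₁ : 0 < w₁) (h₂ : 0 < w₂)
    (hind : ∀ q₀ q₁ q₂ : ℚ,
      (q₀ : ℝ) * (1 / w₀) + (q₁ : ℝ) * (1 / w₁) + (q₂ : ℝ) * (1 / w₂) = 0 →
      q₀ = 0 ∧ q₁ = 0 ∧ q₂ = 0) :
    Dense {x : AddCircle w₀ × AddCircle w₁ × AddCircle w₂ |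
      ∃ t : ℝ, x = (↑t, ↑(-t), ↑(-t))} := by
  haveI : Fact (0 < w₀) := ⟨h₀⟩
  haveI : Fact (0 < w₁) := ⟨h₁⟩
  haveI : Fact (0 < w₂) := ⟨h₂⟩
  open Stmt14Aux in
  have hS : {x : AddCircle w₀ × AddCircle w₁ × AddCircle w₂ |
      ∃ t : ℝ, x = (↑t, ↑(-t), ↑(-t))} = Set.range (Stmt14Aux.φ w₀ w₁ w₂) := by
    ext x
    simp only [Set.mem_setOf_eq, Set.mem_range, Stmt14Aux.φ, eq_comm]
  rw [hS]
  -- the nonvanishing of frequencies, from linear independence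
  have ha : ∀ m : ℤ × ℤ × ℤ,
      m = 0 ∨ (2 * Real.pi * ((m.1 : ℝ) / w₀ - (m.2.1 : ℝ) / w₁ - (m.2.2 : ℝ) / w₂)) ≠ 0 := by
    intro m
    by_cases hm : m = 0
    · exact Or.inl hm
    right
    intro hzero
    have h2π : (2 * Real.pi) ≠ 0 := by positivity
    have hz : (m.1 : ℝ) / w₀ - (m.2.1 : ℝ) / w₁ - (m.2.2 : ℝ) / w₂ = 0 := by
      rcases mul_eq_zero.mp hzero with h | h
      · exact absurd h h2π
      · exact h
    have hq := hind (m.1 : ℚ) (-(m.2.1 : ℚ)) (-(m.2.2 : ℚ)) (by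
      push_cast
      rw [mul_one_div, mul_one_div, mul_one_div, neg_div, neg_div]
      linarith)
    obtain ⟨e1, e2, e3⟩ := hq
    apply hm
    have h1 : m.1 = 0 := by exact_mod_cast e1
    have h2 : m.2.1 = 0 := by
      have : (m.2.1 : ℚ) = 0 := by linarith [e2]
      exact_mod_cast this
    have h3 : m.2.2 = 0 := by
      have : (m.2.2 : ℚ) = 0 := by linarith [e3]
      exact_mod_cast this
    exact Prod.ext h1 (Prod.ext h2 h3)
  by_contra hdense
  obtain ⟨x, hx⟩ : ∃ x, x ∉ closure (Set.range (Stmt14Aux.φ w₀ w₁ w₂)) := by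
    simpa [Dense] using hdense
  -- Urysohn function
  obtain ⟨f, hf0, hf1, hf01⟩ := exists_continuous_zero_one_of_isClosed
    (isClosed_closure (s := Set.range (Stmt14Aux.φ w₀ w₁ w₂))) isClosed_singleton
    (Set.disjoint_singleton_right.mpr hx)
  set F : C(AddCircle w₀ × AddCircle w₁ × AddCircle w₂, ℂ) :=
    ⟨fun y => (f y : ℂ), Complex.continuous_ofReal.comp f.continuous⟩ with hF
  have hFφ : ∀ t : ℝ, F (Stmt14Aux.φ w₀ w₁ w₂ t) = 0 := by
    intro t
    have : f (Stmt14Aux.φ w₀ w₁ w₂ t) = 0 :=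
      hf0 (subset_closure (Set.mem_range_self t))
    simp [hF, this]
  -- the integral of F is zero
  have key : ∀ ε : ℝ, 0 < ε → ‖∫ y, F y ∂(Stmt14Aux.μ3 w₀ w₁ w₂)‖ ≤ 3 * ε := by
    intro ε hε
    have hdF : F ∈ closure ((Submodule.span ℂ
        (Set.range (Stmt14Aux.char w₀ w₁ w₂)) : Submodule ℂ _) : Set _) := by
      have htop := Stmt14Aux.span_char_closure_eq_top w₀ w₁ w₂
      have h2 : ((Submodule.span ℂ (Set.range (Stmt14Aux.char w₀ w₁ w₂))).topologicalClosure
          : Set C(AddCircle w₀ × AddCircle w₁ × AddCircle w₂, ℂ))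
          = closure ((Submodule.span ℂ (Set.range (Stmt14Aux.char w₀ w₁ w₂))) : Set _) :=
        Submodule.topologicalClosure_coe _
      rw [← h2, htop]
      trivial
    obtain ⟨g, hgmem, hgd⟩ := Metric.mem_closure_iff.mp hdF ε hε
    have hT := Stmt14Aux.tendsto_avg_of_mem_span w₀ w₁ w₂ ha g hgmem
    have h3 := (Metric.tendsto_nhds.mp hT) ε hε
    obtain ⟨T, hTd, hT1⟩ := (h3.and (eventually_ge_atTop (1:ℝ))).exists
    have hT0 : (0:ℝ) < T := lt_of_lt_of_le one_pos hT1
    set avg : ℂ := (T:ℂ)⁻¹ • ∫ t in (0:ℝ)..T, g (Stmt14Aux.φ w₀ w₁ w₂ t) with havg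
    -- estimate 1 : ‖∫F - ∫g‖ ≤ ε
    have e1 : ‖(∫ y, F y ∂(Stmt14Aux.μ3 w₀ w₁ w₂)) - ∫ y, g y ∂(Stmt14Aux.μ3 w₀ w₁ w₂)‖ ≤ ε := by
      rw [← integral_sub (Stmt14Aux.integrable_cm w₀ w₁ w₂ F)
        (Stmt14Aux.integrable_cm w₀ w₁ w₂ g)]
      have := norm_integral_le_of_norm_le_const (μ := Stmt14Aux.μ3 w₀ w₁ w₂)
        (f := fun y => F y - g y) (C := ε) (by
          filter_upwards with y
          calc ‖F y - g y‖ = dist (F y) (g y) := (dist_eq_norm _ _).symm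
            _ ≤ dist F g := ContinuousMap.dist_apply_le_dist y
            _ ≤ ε := le_of_lt hgd)
      simpa [measure_univ] using this
    -- estimate 2 : ‖avg - ∫g‖ < ε
    have e2 : ‖avg - ∫ y, g y ∂(Stmt14Aux.μ3 w₀ w₁ w₂)‖ < ε := by
      rw [← dist_eq_norm]
      exact hTd
    -- estimate 3 : ‖avg‖ ≤ ε
    have e3 : ‖avg‖ ≤ ε := by
      have hpt : ∀ t ∈ Set.uIoc (0:ℝ) T, ‖g (Stmt14Aux.φ w₀ w₁ w₂ t)‖ ≤ ε := by
        intro t _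
        calc ‖g (Stmt14Aux.φ w₀ w₁ w₂ t)‖
            = dist (g (Stmt14Aux.φ w₀ w₁ w₂ t)) (F (Stmt14Aux.φ w₀ w₁ w₂ t)) := by
              rw [hFφ t, dist_eq_norm, sub_zero]
          _ ≤ dist g F := ContinuousMap.dist_apply_le_dist _
          _ ≤ ε := le_of_lt (dist_comm F g ▸ hgd)
      have hb := intervalIntegral.norm_integral_le_of_norm_le_const hpt
      rw [havg, norm_smul, norm_inv, Complex.norm_real, Real.norm_eq_abs, abs_of_pos hT0]
      calc T⁻¹ * ‖∫ t in (0:ℝ)..T, g (Stmt14Aux.φ w₀ w₁ w₂ t)‖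
          ≤ T⁻¹ * (ε * |T - 0|) := by gcongr
        _ = ε := by
            rw [sub_zero, abs_of_pos hT0]
            field_simp
    calc ‖∫ y, F y ∂(Stmt14Aux.μ3 w₀ w₁ w₂)‖
        = ‖((∫ y, F y ∂(Stmt14Aux.μ3 w₀ w₁ w₂)) - ∫ y, g y ∂(Stmt14Aux.μ3 w₀ w₁ w₂))
          + ((∫ y, g y ∂(Stmt14Aux.μ3 w₀ w₁ w₂)) - avg) + avg‖ := by ring_nf
      _ ≤ ‖((∫ y, F y ∂(Stmt14Aux.μ3 w₀ w₁ w₂)) - ∫ y, g y ∂(Stmt14Aux.μ3 w₀ w₁ w₂))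
          + ((∫ y, g y ∂(Stmt14Aux.μ3 w₀ w₁ w₂)) - avg)‖ + ‖avg‖ := norm_add_le _ _
      _ ≤ (‖(∫ y, F y ∂(Stmt14Aux.μ3 w₀ w₁ w₂)) - ∫ y, g y ∂(Stmt14Aux.μ3 w₀ w₁ w₂)‖
          + ‖(∫ y, g y ∂(Stmt14Aux.μ3 w₀ w₁ w₂)) - avg‖) + ‖avg‖ := by
            gcongr
            exact norm_add_le _ _
      _ ≤ (ε + ε) + ε := by
            gcongr
            rw [norm_sub_rev]
            exact le_of_lt e2
      _ = 3 * ε := by ring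
  have hFzero : ∫ y, F y ∂(Stmt14Aux.μ3 w₀ w₁ w₂) = 0 := by
    by_contra hne
    have hpos : 0 < ‖∫ y, F y ∂(Stmt14Aux.μ3 w₀ w₁ w₂)‖ := norm_pos_iff.mpr hne
    have := key (‖∫ y, F y ∂(Stmt14Aux.μ3 w₀ w₁ w₂)‖ / 4) (by positivity)
    linarith
  -- but the integral of f is positive
  have hfpos : 0 < ∫ y, f y ∂(Stmt14Aux.μ3 w₀ w₁ w₂) := by
    have hnn : 0 ≤ (f : (AddCircle w₀ × AddCircle w₁ × AddCircle w₂) → ℝ) :=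
      fun y => (hf01 y).1
    have hint : Integrable (f : (AddCircle w₀ × AddCircle w₁ × AddCircle w₂) → ℝ)
        (Stmt14Aux.μ3 w₀ w₁ w₂) :=
      f.continuous.integrable_of_hasCompactSupport (HasCompactSupport.of_compactSpace _)
    refine (integral_pos_iff_support_of_nonneg hnn hint).mpr ?_
    have hU : IsOpen (f ⁻¹' Set.Ioi (0:ℝ)) := isOpen_Ioi.preimage f.continuous
    have hxU : x ∈ f ⁻¹' Set.Ioi (0:ℝ) := by
      have : f x = 1 := hf1 rfl
      simp [this]
    have hpos := hU.measure_pos (Stmt14Aux.μ3 w₀ w₁ w₂) ⟨x, hxU⟩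
    refine lt_of_lt_of_le hpos (measure_mono ?_)
    intro y hy
    exact ne_of_gt (Set.mem_preimage.mp hy)
  have : (↑(∫ y, f y ∂(Stmt14Aux.μ3 w₀ w₁ w₂)) : ℂ) = 0 := by
    rw [← hFzero, hF]
    exact (integral_ofReal).symm
  rw [Complex.ofReal_eq_zero] at this
  exact absurd this (ne_of_gt hfpos)
end
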